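/- arXiv:1512.09088 — 11 statements merged into one kernel-verified Lean document; each statement's English description precedes it below -/
import Mathlib

section
/- Let (B,Λ) and (C,Π) be Poisson k-algebras over a field k of characteristic 0, and let f:(C,Π)→(B,Λ) be a Poisson algebra homomorphism (i.e. f(Π(a,b)) = Λ(f(a),f(b)) for all a,b ∈ C). Define π on Q ∈ Hom_C(∧^q Ω_{C/k}, B) by π(Q)(a_1,…,a_{q+1}) = Σ_{σ∈S_{q,1}} sgn(σ) Λ(Q(a_{σ(1)},…,a_{σ(q)}), f(a_{σ(q+1)})) − (−1)^{q−1} Σ_{σ∈S_{2,q−1}} sgn(σ) Q(Π(a_{σ(1)},a_{σ(2)}), a_{σ(3)},…,a_{σ(q+1)}). Then π∘π = 0, i.e. the sequence Hom_C(Ω_{C/k},B) → Hom_C(∧²Ω_{C/k},B) → Hom_C(∧³Ω_{C/k},B) → ⋯ is a complex. -/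
/-!
STATEMENT 0.  The complex `Hom_C(Ω_{C/k},B) → Hom_C(∧²Ω_{C/k},B) → ⋯` associated with a
Poisson homomorphism `f : (C,Π) → (B,Λ)`.  An element of `Hom_C(∧^n Ω_{C/k}, B)` is
modelled as an alternating `k`-multilinear map `C^n → B` which is a derivation (over `f`)
in each argument.  The differential `π` is defined by the shuffle formula of the paper,
and the statement asserts `π ∘ π = 0`.
-/

/-- A Poisson bracket on a commutative algebra `R` over a base commutative ring `R₀`:
an antisymmetric biderivation satisfying the Jacobi identity. -/
structure PoissonBracket (R₀ R : Type*) [CommRing R₀] [CommRing R] [Algebra R₀ R] where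
  br : R → R → R
  add_left : ∀ a b c, br (a + b) c = br a c + br b c
  smul_left : ∀ (r : R₀) (a b : R), br (r • a) b = r • br a b
  antisymm : ∀ a b, br a b = - br b a
  leibniz : ∀ a b c, br a (b * c) = br a b * c + b * br a c
  jacobi : ∀ a b c, br a (br b c) + br b (br c a) + br c (br a b) = 0

variable {k B C : Type*} [Field k] [CommRing B] [CommRing C] [Algebra k B] [Algebra k C]

/-- `Q ∈ Hom_C(∧^n Ω_{C/k}, B)`: an alternating `k`-multilinear map `C^n → B` which is a
derivation over `f` in each argument. -/
def IsPolyDeriv (f : C →ₐ[k] B) {n : ℕ} (Q : (Fin n → C) → B) : Prop :=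
  (∀ (x : Fin n → C) (i : Fin n) (a b : C),
      Q (Function.update x i (a + b)) = Q (Function.update x i a) + Q (Function.update x i b)) ∧
  (∀ (x : Fin n → C) (i : Fin n) (r : k) (a : C),
      Q (Function.update x i (r • a)) = r • Q (Function.update x i a)) ∧
  (∀ (x : Fin n → C) (i : Fin n) (a b : C),
      Q (Function.update x i (a * b)) =
        f a * Q (Function.update x i b) + f b * Q (Function.update x i a)) ∧
  (∀ (x : Fin n → C) (i j : Fin n), i ≠ j → x i = x j → Q x = 0)

/-- The differential
`π(Q)(a_1,…,a_{q+1}) = Σ_{σ ∈ S_{q,1}} sgn(σ) Λ(Q(a_{σ(1)},…,a_{σ(q)}), f(a_{σ(q+1)}))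
  − (−1)^{q−1} Σ_{σ ∈ S_{2,q−1}} sgn(σ) Q(Π(a_{σ(1)},a_{σ(2)}), a_{σ(3)},…,a_{σ(q+1)})`
written out over `Fin`-indexed arguments (here `q = n+1`). -/
def piDiff (L : PoissonBracket k B) (P : PoissonBracket k C) (f : C →ₐ[k] B)
    {n : ℕ} (Q : (Fin (n + 1) → C) → B) : (Fin (n + 2) → C) → B := fun x =>
  (∑ i : Fin (n + 2), (-1 : B) ^ (n + 1 - (i : ℕ)) * L.br (Q (x ∘ i.succAbove)) (f (x i)))
    + (-1 : B) ^ (n + 1) *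
      ∑ i : Fin (n + 2), ∑ j : Fin (n + 1),
        if (i : ℕ) < ((i.succAbove j : Fin (n + 2)) : ℕ) then
          (-1 : B) ^ ((i : ℕ) + ((i.succAbove j : Fin (n + 2)) : ℕ) + 1) *
            Q (Fin.cons (P.br (x i) (x (i.succAbove j))) (x ∘ i.succAbove ∘ j.succAbove))
        else 0

/-!
Through `f`, the Hamiltonian derivations `a ↦ Λ(f a, ·)` make `B` a module over the Lie ring
`(C, Π)`, and `π` is, up to the sign `(-1)^n`, its Chevalley–Eilenberg differential `d`. Writing
`ι_a` for insertion of `a` in the first slot and `L_a` for the Lie derivative, `d` satisfies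
Cartan's formula `ι_a d + d ι_a = L_a`, so that `[L_b, d] = 0` and then `d² = 0` follow by
induction on the degree from `[L_b, L_c] = L_{[b,c]}`, which is the Jacobi identity plus `f`
being a Poisson map. The bracket is only assumed antisymmetric, so cochains are antisymmetric
functions rather than alternating maps, and `d` is shown to preserve antisymmetry.
-/

namespace ChevalleyEilenberg

open Function

variable {A M : Type*} [AddCommGroup M] {β : A → A → A} {ρ : A → M →+ M} {n : ℕ}

def contract (a : A) : ((Fin (n + 1) → A) → M) →+ ((Fin n → A) → M) where
  toFun Q y := Q (Fin.cons a y)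
  map_zero' := rfl
  map_add' _ _ := rfl

variable (β ρ) in
def lieDeriv (a : A) : ((Fin n → A) → M) →+ ((Fin n → A) → M) where
  toFun Q y := ρ a (Q y) - ∑ i, Q (update y i (β a (y i)))
  map_zero' := by ext; simp
  map_add' _ _ := by ext; simp only [Pi.add_apply, map_add, Finset.sum_add_distrib]; abel

variable (β ρ) in
/-- The Chevalley–Eilenberg formula with the bracket term `Σ_{i<j} ± Q([x_i,x_j], …)`
rewritten by putting `[x_i,x_j]` into the slot of `x_j`; in this form it satisfies the
recursion `contract_diff` for every `Q`, antisymmetric or not. -/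
def diff : ((Fin n → A) → M) →+ ((Fin (n + 1) → A) → M) where
  toFun Q x := ∑ i : Fin (n + 1), (-1 : ℤ) ^ (i : ℕ) •
    (ρ (x i) (Q (x ∘ i.succAbove)) - ∑ j : Fin n,
      if i < i.succAbove j then Q (update (x ∘ i.succAbove) j (β (x i) (x (i.succAbove j))))
      else 0)
  map_zero' := by ext; simp
  map_add' Q Q' := by
    ext x
    simp only [Pi.add_apply, map_add, ← Finset.sum_add_distrib, ← smul_add]
    refine Finset.sum_congr rfl fun i _ => congrArg _ ?_
    simp only [ite_add_zero, Finset.sum_add_distrib]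
    abel

@[simp] lemma contract_apply (a : A) (Q : (Fin (n + 1) → A) → M) (y : Fin n → A) :
    contract a Q y = Q (Fin.cons a y) := rfl

lemma lieDeriv_apply (a : A) (Q : (Fin n → A) → M) (y : Fin n → A) :
    lieDeriv β ρ a Q y = ρ a (Q y) - ∑ i, Q (update y i (β a (y i))) := rfl

lemma cochain_ext {T T' : (Fin (n + 1) → A) → M}
    (h : ∀ a, contract a T = contract a T') : T = T' := by
  funext y
  simpa [Fin.cons_self_tail] using congrFun (h (y 0)) (Fin.tail y)

lemma contract_diff_zero (a : A) (Q : (Fin 0 → A) → M) :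
    contract a (diff β ρ Q) = lieDeriv β ρ a Q := by
  ext y
  simp [diff, lieDeriv_apply]

lemma contract_diff (a : A) (Q : (Fin (n + 1) → A) → M) :
    contract a (diff β ρ Q) = lieDeriv β ρ a Q - diff β ρ (contract a Q) := by
  ext y
  have hcomp : ∀ i : Fin (n + 1),
      Fin.cons a y ∘ i.succ.succAbove = Fin.cons a (y ∘ i.succAbove) :=
    Fin.cons_comp_succ_succAbove a y
  have hinner : ∀ i : Fin (n + 1), (∑ j : Fin (n + 1), if i.succ < i.succ.succAbove j then
      Q (update (Fin.cons a (y ∘ i.succAbove)) j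
        (β (y i) ((Fin.cons a y : Fin (n + 2) → A) (i.succ.succAbove j))))
      else 0) = ∑ j : Fin n, if i < i.succAbove j then
      Q (Fin.cons a (update (y ∘ i.succAbove) j (β (y i) (y (i.succAbove j))))) else 0 := by
    intro i
    rw [Fin.sum_univ_succ]
    simp [Fin.cons_update]
  simp only [diff, AddMonoidHom.coe_mk, ZeroHom.coe_mk, contract_apply, Pi.sub_apply,
    lieDeriv_apply]
  rw [Fin.sum_univ_succ]
  simp only [hcomp, hinner, Fin.succAbove_zero, Fin.cons_zero, Fin.cons_succ, Fin.cons_comp_succ,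
    Fin.succ_pos, if_true, Fin.val_zero, Fin.val_succ, pow_zero, pow_succ, one_smul, mul_neg_one,
    neg_smul, Finset.sum_neg_distrib]
  abel

lemma contract_lieDeriv (b c : A) (T : (Fin (n + 1) → A) → M) :
    contract c (lieDeriv β ρ b T) = lieDeriv β ρ b (contract c T) - contract (β b c) T := by
  ext y
  simp [lieDeriv_apply, Fin.sum_univ_succ, Fin.cons_update]
  abel

lemma _root_.Finset.sum_sum_sub_sum_sum_eq_sum_diag {ι : Type*} [Fintype ι]
    (F F' : ι → ι → M) (h : ∀ i j, i ≠ j → F i j = F' j i) :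
    ∑ i, ∑ j, F i j - ∑ i, ∑ j, F' i j = ∑ i, (F i i - F' i i) := by
  rw [Finset.sum_comm (f := F'), ← Finset.sum_sub_distrib]
  refine Finset.sum_congr rfl fun i _ => ?_
  rw [← Finset.sum_sub_distrib,
    Finset.sum_eq_single i (fun j _ hj => by rw [h i j hj.symm, sub_self]) (by simp)]

def IsAntisymmetric (Q : (Fin n → A) → M) : Prop :=
  ∀ (y : Fin n → A) (i j : Fin n), i ≠ j → Q (y ∘ Equiv.swap i j) = -Q y

lemma IsAntisymmetric.sub {Q Q' : (Fin n → A) → M} (hQ : IsAntisymmetric Q)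
    (hQ' : IsAntisymmetric Q') : IsAntisymmetric (Q - Q') := fun y i j hij => by
  simp only [Pi.sub_apply, hQ y i j hij, hQ' y i j hij, neg_sub_neg, neg_sub]

lemma IsAntisymmetric.zsmul {Q : (Fin n → A) → M} (hQ : IsAntisymmetric Q) (c : ℤ) :
    IsAntisymmetric (c • Q) := fun y i j hij => by
  simp only [Pi.smul_apply, hQ y i j hij, smul_neg]

lemma IsAntisymmetric.map_perm {Q : (Fin n → A) → M} (hQ : IsAntisymmetric Q)
    (y : Fin n → A) (σ : Equiv.Perm (Fin n)) : Q (y ∘ σ) = Equiv.Perm.sign σ • Q y := by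
  induction σ using Equiv.Perm.swap_induction_on' generalizing y with
  | one => simp
  | mul_swap σ i j hij ih =>
    rw [Equiv.Perm.coe_mul, ← comp_assoc, hQ _ i j hij, ih, Equiv.Perm.sign_mul,
      Equiv.Perm.sign_swap hij, mul_neg_one, Units.neg_smul]

lemma IsAntisymmetric.cons_comp_succAbove {Q : (Fin (n + 1) → A) → M}
    (hQ : IsAntisymmetric Q) (c : A) (z : Fin (n + 1) → A) (j : Fin (n + 1)) :
    Q (Fin.cons c (z ∘ j.succAbove)) = (-1 : ℤ) ^ (j : ℕ) • Q (update z j c) := by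
  have hperm : Fin.cons c (z ∘ j.succAbove) = update z j c ∘ j.cycleRange.symm := by
    funext k
    cases k using Fin.cases with
    | zero => simp [Fin.cycleRange_symm_zero]
    | succ k => simp [Fin.cycleRange_symm_succ]
  rw [hperm, hQ.map_perm, Equiv.Perm.sign_symm, Fin.sign_cycleRange, Units.smul_def]
  simp

lemma cons_comp_swap_succ (a : A) (y : Fin n → A) (i j : Fin n) :
    (Fin.cons a y : Fin (n + 1) → A) ∘ Equiv.swap i.succ j.succ =
      Fin.cons a (y ∘ Equiv.swap i j) := by
  funext k
  cases k using Fin.cases with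
  | zero => simp [Equiv.swap_apply_of_ne_of_ne (Fin.succ_ne_zero i).symm (Fin.succ_ne_zero j).symm]
  | succ k => simp [Fin.succ_injective _ |>.swap_apply]

lemma cons_cons_comp_swap_zero_one (u v : A) (w : Fin n → A) :
    (Fin.cons u (Fin.cons v w) : Fin (n + 2) → A) ∘ Equiv.swap 0 1 =
      Fin.cons v (Fin.cons u w) := by
  funext k
  cases k using Fin.cases with
  | zero => simp
  | succ k =>
    cases k using Fin.cases with
    | zero => simp
    | succ k =>
      rw [comp_apply, Equiv.swap_apply_of_ne_of_ne (Fin.succ_ne_zero _)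
        (by simp [Fin.ext_iff])]
      simp

lemma IsAntisymmetric.contract {Q : (Fin (n + 1) → A) → M} (hQ : IsAntisymmetric Q)
    (a : A) : IsAntisymmetric (contract a Q) := fun y i j hij => by
  simpa only [contract_apply, cons_comp_swap_succ] using
    hQ (Fin.cons a y) i.succ j.succ (Fin.succ_injective _ |>.ne hij)

lemma contract_contract_eq_neg {Q : (Fin (n + 2) → A) → M} (hQ : IsAntisymmetric Q) (u v : A) :
    contract v (contract u Q) = -contract u (contract v Q) := by
  ext w
  simpa only [contract_apply, Pi.neg_apply, cons_cons_comp_swap_zero_one] using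
    hQ (Fin.cons v (Fin.cons u w)) 0 1 Fin.zero_ne_one

lemma IsAntisymmetric.lieDeriv {Q : (Fin n → A) → M} (hQ : IsAntisymmetric Q) (a : A) :
    IsAntisymmetric (lieDeriv β ρ a Q) := fun y i j hij => by
  have hupdate : ∀ t, Q (update (y ∘ Equiv.swap i j) t (β a (y (Equiv.swap i j t))))
      = -Q (update y (Equiv.swap i j t) (β a (y (Equiv.swap i j t)))) := fun t => by
    rw [← hQ _ i j hij, update_comp_equiv, Equiv.symm_apply_apply]
  simp only [lieDeriv_apply, comp_apply, hupdate, hQ y i j hij, map_neg, Finset.sum_neg_distrib,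
    Equiv.sum_comp (Equiv.swap i j) (fun t => Q (update y t (β a (y t))))]
  abel

lemma isAntisymmetric_of_contract {T : (Fin (n + 2) → A) → M}
    (h01 : ∀ u v, contract v (contract u T) = -contract u (contract v T))
    (hc : ∀ a, IsAntisymmetric (contract a T)) : IsAntisymmetric T := by
  have hsucc : ∀ y (i j : Fin (n + 1)), i ≠ j →
      T (y ∘ Equiv.swap i.succ j.succ) = -T y := by
    intro y i j hij
    rw [← Fin.cons_self_tail y, cons_comp_swap_succ]
    exact hc (y 0) (Fin.tail y) i j hij
  have hzero_one : ∀ y, T (y ∘ Equiv.swap 0 1) = -T y := by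
    intro y
    rw [← Fin.cons_self_tail y, ← Fin.cons_self_tail (Fin.tail y), cons_cons_comp_swap_zero_one]
    exact congrFun (h01 _ _) _
  have hzero : ∀ y (j : Fin (n + 1)), T (y ∘ Equiv.swap 0 j.succ) = -T y := by
    intro y j
    rcases eq_or_ne j 0 with rfl | hj
    · exact hzero_one y
    have hone : ∀ y, T (y ∘ Equiv.swap 1 j.succ) = -T y := by
      simpa only [Fin.succ_zero_eq_one] using (hsucc · 0 j hj.symm)
    rw [Equiv.swap_comm, ← Equiv.swap_mul_swap_mul_swap Fin.zero_ne_one (Fin.succ_ne_zero j).symm]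
    simp only [Equiv.Perm.coe_mul, ← comp_assoc]
    rw [hone, hzero_one, hone, neg_neg]
  intro y i j hij
  cases i using Fin.cases with
  | zero =>
    obtain ⟨j, rfl⟩ := Fin.exists_succ_eq.mpr hij.symm
    exact hzero y j
  | succ i =>
    cases j using Fin.cases with
    | zero => rw [Equiv.swap_comm]; exact hzero y i
    | succ j => exact hsucc y i j ((Fin.succ_injective _).ne_iff.mp hij)

section LieAction

variable [AddCommGroup A]

def IsMultiadditive (Q : (Fin n → A) → M) : Prop :=
  ∀ (y : Fin n → A) (i : Fin n) (a b : A),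
    Q (update y i (a + b)) = Q (update y i a) + Q (update y i b)

variable (β ρ) in
structure IsLieAction : Prop where
  antisymm : ∀ a b, β a b = -β b a
  leibniz : ∀ a b c, β a (β b c) = β (β a b) c + β b (β a c)
  map_bracket : ∀ a b m, ρ (β a b) m = ρ a (ρ b m) - ρ b (ρ a m)

lemma IsMultiadditive.isAntisymmetric {Q : (Fin n → A) → M} (hQ : IsMultiadditive Q)
    (halt : ∀ (y : Fin n → A) (i j : Fin n), i ≠ j → y i = y j → Q y = 0) :
    IsAntisymmetric Q := by
  let g : A [⋀^Fin n]→ₗ[ℤ] M :=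
    { toFun := Q
      map_update_add' := fun {_} y i a b => by
        obtain rfl : ‹DecidableEq (Fin n)› = instDecidableEqFin n := Subsingleton.elim _ _
        exact hQ y i a b
      map_update_smul' := fun {_} y i c a => by
        obtain rfl : ‹DecidableEq (Fin n)› = instDecidableEqFin n := Subsingleton.elim _ _
        exact (AddMonoidHom.mk' (fun a => Q (update y i a)) (hQ y i)).map_zsmul c a
      map_eq_zero_of_eq' := fun y i j h hij => halt y i j hij h }
  exact fun y i j hij => g.map_swap y hij

lemma IsMultiadditive.contract {Q : (Fin (n + 1) → A) → M} (hQ : IsMultiadditive Q) (a : A) :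
    IsMultiadditive (contract a Q) := by
  intro y i u v
  simpa only [contract_apply, Fin.cons_update] using hQ (Fin.cons a y) i.succ u v

lemma lieDeriv_commutator (hβρ : IsLieAction β ρ) {T : (Fin n → A) → M}
    (hT : IsMultiadditive T) (b c : A) :
    lieDeriv β ρ b (lieDeriv β ρ c T) - lieDeriv β ρ c (lieDeriv β ρ b T) =
      lieDeriv β ρ (β b c) T := by
  ext y
  set F : A → A → Fin n → Fin n → M := fun b c i j =>
    T (update (update y i (β b (y i))) j (β c (update y i (β b (y i)) j)))
  have hoff : ∀ i j, i ≠ j → F b c i j = F c b j i := fun i j hij => by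
    simp only [F, update_of_ne hij.symm, update_of_ne hij, update_comm hij]
  have hdiag : ∀ i, F b c i i - F c b i i = -T (update y i (β (β b c) (y i))) := fun i => by
    simp only [F, update_self, update_idem]
    rw [hβρ.leibniz b c, hT]
    abel
  have hexpand : ∀ b c, lieDeriv β ρ b (lieDeriv β ρ c T) y = ρ b (ρ c (T y))
      - ∑ i, ρ b (T (update y i (β c (y i)))) - ∑ i, ρ c (T (update y i (β b (y i))))
      + ∑ i, ∑ j, F b c i j := fun b c => by
    simp only [lieDeriv_apply, map_sub, map_sum, Finset.sum_sub_distrib, F]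
    abel
  rw [Pi.sub_apply, hexpand, hexpand, lieDeriv_apply, hβρ.map_bracket]
  have := Finset.sum_sum_sub_sum_sum_eq_sum_diag (F b c) (F c b) hoff
  rw [sub_eq_iff_eq_add] at this
  simp only [hdiag, Finset.sum_neg_distrib] at this
  rw [this]
  abel

lemma lieDeriv_diff (hβρ : IsLieAction β ρ) {Q : (Fin n → A) → M} (hQ : IsMultiadditive Q)
    (b : A) : lieDeriv β ρ b (diff β ρ Q) = diff β ρ (lieDeriv β ρ b Q) := by
  induction n with
  | zero =>
    refine cochain_ext fun c => ?_
    rw [contract_lieDeriv, contract_diff_zero, contract_diff_zero, contract_diff_zero,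
      ← lieDeriv_commutator hβρ hQ]
    abel
  | succ n ih =>
    refine cochain_ext fun c => ?_
    rw [contract_lieDeriv, contract_diff, contract_diff, contract_diff, contract_lieDeriv, map_sub,
      map_sub, ih (hQ.contract c), ← lieDeriv_commutator hβρ hQ]
    abel

theorem diff_diff (hβρ : IsLieAction β ρ) {Q : (Fin n → A) → M} (hQ : IsMultiadditive Q) :
    diff β ρ (diff β ρ Q) = 0 := by
  induction n with
  | zero =>
    refine cochain_ext fun a => ?_
    rw [contract_diff, contract_diff_zero, lieDeriv_diff hβρ hQ, sub_self, map_zero]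
  | succ n ih =>
    refine cochain_ext fun a => ?_
    rw [contract_diff, contract_diff, map_sub, lieDeriv_diff hβρ hQ, ih (hQ.contract a), map_zero]
    abel

lemma contract_neg {Q : (Fin (n + 1) → A) → M} (hQ : IsMultiadditive Q) (a : A) :
    contract (-a) Q = -contract a Q := by
  ext y
  simpa only [contract_apply, Fin.update_cons_zero, Pi.neg_apply, AddMonoidHom.mk'_apply] using
    (AddMonoidHom.mk' (fun b => Q (update (Fin.cons a y) 0 b)) (hQ (Fin.cons a y) 0)).map_neg a

lemma contract_contract_diff (hβ : ∀ a b, β a b = -β b a) {Q : (Fin (n + 1) → A) → M}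
    (hA : IsMultiadditive Q) (hS : IsAntisymmetric Q) (u v : A) :
    contract v (contract u (diff β ρ Q)) = -contract u (contract v (diff β ρ Q)) := by
  have hbr : contract (β v u) Q = -contract (β u v) Q := by rw [hβ, contract_neg hA]
  cases n with
  | zero =>
    simp only [contract_diff, contract_diff_zero, map_sub, contract_lieDeriv, hbr]
    abel
  | succ n =>
    simp only [contract_diff, map_sub, contract_lieDeriv, hbr, contract_contract_eq_neg hS v u,
      map_neg]
    abel

lemma IsAntisymmetric.diff (hβ : ∀ a b, β a b = -β b a) {Q : (Fin n → A) → M}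
    (hA : IsMultiadditive Q) (hS : IsAntisymmetric Q) : IsAntisymmetric (diff β ρ Q) := by
  induction n with
  | zero => exact fun _ i j hij => (hij (Fin.ext (by omega))).elim
  | succ n ih =>
    refine isAntisymmetric_of_contract (contract_contract_diff hβ hA hS) fun a => ?_
    rw [contract_diff]
    exact (hS.lieDeriv a).sub (ih (hA.contract a) (hS.contract a))

end LieAction

end ChevalleyEilenberg

namespace PoissonBracket

variable {R₀ R : Type*} [CommRing R₀] [CommRing R] [Algebra R₀ R] (P : PoissonBracket R₀ R)

lemma br_neg_left (a b : R) : P.br (-a) b = -P.br a b :=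
  (AddMonoidHom.mk' (P.br · b) (P.add_left · · b)).map_neg a

lemma br_add_right (a b c : R) : P.br a (b + c) = P.br a b + P.br a c := by
  rw [P.antisymm a, P.add_left, P.antisymm b a, P.antisymm c a]
  abel

lemma br_neg_right (a b : R) : P.br a (-b) = -P.br a b := by
  rw [P.antisymm, P.br_neg_left, neg_neg, P.antisymm]

lemma br_br (a b c : R) : P.br a (P.br b c) = P.br (P.br a b) c + P.br b (P.br a c) := by
  have h := P.jacobi a b c
  rw [P.antisymm c a, P.br_neg_right, P.antisymm c] at h
  linear_combination h

def hamiltonian (a : R) : R →+ R := AddMonoidHom.mk' (P.br a) (P.br_add_right a)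

lemma hamiltonian_apply (a b : R) : P.hamiltonian a b = P.br a b := rfl

end PoissonBracket

open ChevalleyEilenberg Function

lemma isLieAction_of_map_br (L : PoissonBracket k B) (P : PoissonBracket k C) (f : C →ₐ[k] B)
    (hf : ∀ a b, f (P.br a b) = L.br (f a) (f b)) :
    IsLieAction P.br (fun a => L.hamiltonian (f a)) where
  antisymm := P.antisymm
  leibniz := P.br_br
  map_bracket a b m := by
    simp only [PoissonBracket.hamiltonian_apply, hf, L.br_br (f a) (f b) m]
    abel

lemma piDiff_eq_zsmul_diff (L : PoissonBracket k B) (P : PoissonBracket k C) (f : C →ₐ[k] B)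
    {n : ℕ} {Q : (Fin (n + 1) → C) → B} (hQ : IsAntisymmetric Q) :
    piDiff L P f Q = (-1 : ℤ) ^ n • diff P.br (fun a => L.hamiltonian (f a)) Q := by
  funext x
  have hact : ∀ i : Fin (n + 2),
      (-1 : B) ^ (n + 1 - (i : ℕ)) * L.br (Q (x ∘ i.succAbove)) (f (x i)) =
        (-1) ^ n * ((-1) ^ (i : ℕ) * L.br (f (x i)) (Q (x ∘ i.succAbove))) := fun i => by
    rw [L.antisymm, neg_one_pow_congr (R := B) (m := n + 1 - i) (n := n + i + 1)
      (by simp only [Nat.even_iff]; omega)]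
    ring
  have hbr : ∀ (i : Fin (n + 2)) (j : Fin (n + 1)),
      (-1 : B) ^ (n + 1) * (if (i : ℕ) < ((i.succAbove j : Fin (n + 2)) : ℕ) then
        (-1 : B) ^ ((i : ℕ) + ((i.succAbove j : Fin (n + 2)) : ℕ) + 1) *
          Q (Fin.cons (P.br (x i) (x (i.succAbove j))) (x ∘ i.succAbove ∘ j.succAbove)) else 0)
      = -((-1) ^ n * ((-1) ^ (i : ℕ) * (if i < i.succAbove j then
          Q (update (x ∘ i.succAbove) j (P.br (x i) (x (i.succAbove j)))) else 0))) :=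
      fun i j => by
    by_cases h : i < i.succAbove j
    · have hj : i.succAbove j = j.succ :=
        Fin.succAbove_of_le_castSucc _ _ ((Fin.lt_succAbove_iff_le_castSucc _ _).mp h)
      rw [if_pos (show (i : ℕ) < _ from h), if_pos h, ← comp_assoc, hQ.cons_comp_succAbove,
        zsmul_eq_mul, hj]
      simp only [Fin.val_succ, Int.cast_pow, Int.cast_neg, Int.cast_one]
      rw [← mul_assoc, ← mul_assoc, ← pow_add, ← pow_add,
        neg_one_pow_congr (n := n + i + 1) (by simp only [Nat.even_iff]; omega), pow_succ]
      ring
    · rw [if_neg (show ¬(i : ℕ) < _ from h), if_neg h]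
      ring
  simp only [piDiff, Pi.smul_apply, diff, AddMonoidHom.coe_mk, ZeroHom.coe_mk, zsmul_eq_mul,
    Int.cast_pow, Int.cast_neg, Int.cast_one, PoissonBracket.hamiltonian_apply,
    Finset.mul_sum, hact, hbr, Finset.sum_neg_distrib, sub_eq_add_neg, mul_add, mul_neg,
    Finset.sum_add_distrib]

/-- `π ∘ π = 0`, i.e. the sequence
`Hom_C(Ω_{C/k},B) → Hom_C(∧²Ω_{C/k},B) → Hom_C(∧³Ω_{C/k},B) → ⋯` is a complex. -/
theorem piDiff_comp_piDiff_eq_zero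
    (L : PoissonBracket k B) (P : PoissonBracket k C) (f : C →ₐ[k] B)
    (hf : ∀ a b, f (P.br a b) = L.br (f a) (f b))
    {n : ℕ} (Q : (Fin (n + 1) → C) → B) (hQ : IsPolyDeriv f Q) :
    piDiff L P f (piDiff L P f Q) = 0 := by
  have hβρ := isLieAction_of_map_br L P f hf
  have hA : IsMultiadditive Q := hQ.1
  have hS : IsAntisymmetric Q := hA.isAntisymmetric hQ.2.2.2
  have hS' : IsAntisymmetric (piDiff L P f Q) := by
    rw [piDiff_eq_zsmul_diff L P f hS]
    exact (hS.diff hβρ.antisymm hA).zsmul _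
  rw [piDiff_eq_zsmul_diff L P f hS', piDiff_eq_zsmul_diff L P f hS, map_zsmul,
    diff_diff hβρ hA, smul_zero, smul_zero]
end

section
/- Let f:(C,Π)→(B,Λ) be a Poisson k-homomorphism of Poisson k-algebras. For P ∈ Hom_B(∧^q Ω_{B/k}, B) define F(P)(a_1,…,a_q) = P(f(a_1),…,f(a_q)) ∈ Hom_C(∧^q Ω_{C/k}, B). Then F is a chain map from the Lichnerowicz–Poisson complex (Hom_B(∧^•Ω_{B/k},B), [Λ,−]) to the complex (Hom_C(∧^•Ω_{C/k},B), π), i.e. F([Λ,P]) = π(F(P)) for all P. -/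
variable {k B C : Type*} [Field k] [CommRing B] [CommRing C] [Algebra k B] [Algebra k C]

/-- `F : Hom_B(∧^n Ω_{B/k},B) → Hom_C(∧^n Ω_{C/k},B)`, `F(P)(a_1,…,a_n) = P(f a_1,…,f a_n)`. -/
def Fmap (f : C →ₐ[k] B) {n : ℕ} (P : (Fin n → B) → B) : (Fin n → C) → B :=
  fun x => P fun i => f (x i)

/-- `F` is a chain map from the Lichnerowicz–Poisson complex
`(Hom_B(∧^•Ω_{B/k},B), [Λ,−])` (here realized as `piDiff L L id`, the differential
`[Λ,−]`) to the complex `(Hom_C(∧^•Ω_{C/k},B), π)`: `F([Λ,P]) = π(F(P))` for all `P`. -/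
theorem Fmap_is_chain_map
    (L : PoissonBracket k B) (Pc : PoissonBracket k C) (f : C →ₐ[k] B)
    (hf : ∀ a b, f (Pc.br a b) = L.br (f a) (f b))
    {n : ℕ} (P : (Fin (n + 1) → B) → B) :
    Fmap f (piDiff L L (AlgHom.id k B) P) = piDiff L Pc f (Fmap f P) := by
  funext x
  simp only [Fmap, piDiff, AlgHom.id_apply, Function.comp_def]
  congr 1
  congr 1
  refine Finset.sum_congr rfl fun i _ => Finset.sum_congr rfl fun j _ => ?_
  split <;> [skip; rfl]
  congr 1
  congr 1
  funext m
  induction m using Fin.cases <;> simp [hf]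
end

section
/- Let f:(C,Π)→(B,Λ) be a Poisson k-homomorphism. For Q ∈ Hom_C(∧^q Ω_{C/k}, C) define f^*(Q)(a_1,…,a_q) = f(Q(a_1,…,a_q)) ∈ Hom_C(∧^q Ω_{C/k}, B). Then f^* is a chain map from the Lichnerowicz–Poisson complex (Hom_C(∧^•Ω_{C/k},C), [Π,−]) to the complex (Hom_C(∧^•Ω_{C/k},B), π), i.e. f^*([Π,Q]) = π(f^*(Q)) for all Q. -/
variable {k B C : Type*} [Field k] [CommRing B] [CommRing C] [Algebra k B] [Algebra k C]

/-- `f^* : Hom_C(∧^n Ω_{C/k},C) → Hom_C(∧^n Ω_{C/k},B)`, `f^*(Q)(a_1,…,a_n) = f(Q(a_1,…,a_n))`. -/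
def pullbackMap (f : C →ₐ[k] B) {n : ℕ} (Q : (Fin n → C) → C) : (Fin n → C) → B :=
  fun x => f (Q x)

/-- `f^*` is a chain map from the Lichnerowicz–Poisson complex
`(Hom_C(∧^•Ω_{C/k},C), [Π,−])` (realized as `piDiff P P id`) to the complex
`(Hom_C(∧^•Ω_{C/k},B), π)`: `f^*([Π,Q]) = π(f^*(Q))` for all `Q`. -/
theorem pullback_is_chain_map
    (L : PoissonBracket k B) (P : PoissonBracket k C) (f : C →ₐ[k] B)
    (hf : ∀ a b, f (P.br a b) = L.br (f a) (f b))
    {n : ℕ} (Q : (Fin (n + 1) → C) → C) :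
    pullbackMap f (piDiff P P (AlgHom.id k C) Q) = piDiff L P f (pullbackMap f Q) := by
  funext x
  simp only [pullbackMap, piDiff, map_add, map_mul, map_sum, map_pow, map_neg, map_one,
    hf, apply_ite f, map_zero, AlgHom.coe_id, id_eq]
end

section
/- Let 0→(t)→Ã→A→0 be a small extension of commutative rings, let f:(C,Π)→(B,Λ) be a Poisson homomorphism of Poisson k-algebras, and let Φ̃, Φ̃′ : C⊗Ã → B⊗Ã be two liftings of the same Poisson Ã/(t)-homomorphism Φ with Φ̃′ − Φ̃ = tQ for a derivation Q ∈ Der_k(C,B). If P, P′ ∈ Hom_C(∧²Ω_{C/k},B) are defined by Φ̃^*Π − Φ̃Λ = tP and Φ̃′^*Π − Φ̃′Λ = tP′ (where (Φ̃^*Π − Φ̃Λ)(a,b) = Φ̃(Π(a,b)) − Λ(Φ̃(a),Φ̃(b))), then P′ − P = −π(Q), where π(Q)(a,b) = Λ(Q(a),f(b)) + Λ(f(a),Q(b)) − Q(Π(a,b)). -/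
/-!
STATEMENT 4.  Two liftings `Φ̃, Φ̃′ : C⊗Ã → B⊗Ã` of the same Poisson `A`-homomorphism
over a small extension `0 → (t) → Ã → A → 0` (so `t·m_Ã = 0`, modelled by `t·t = 0`,
`t·(Φ̃(ιa) − ι(f a)) = 0`, and `t • ιB` injective on `B ≅ B⊗(t)`), with
`Φ̃′ − Φ̃ = tQ` for a derivation `Q ∈ Der_k(C,B)`.  If `tP = Φ̃^*Π − Φ̃Λ` and
`tP′ = Φ̃′^*Π − Φ̃′Λ`, then `P′ − P = −π(Q)`.
-/
theorem stmt4
    {k B C At BA CA : Type*} [Field k]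
    [CommRing B] [CommRing C] [Algebra k B] [Algebra k C]
    [CommRing At] [CommRing BA] [CommRing CA] [Algebra At BA] [Algebra At CA]
    (L : PoissonBracket k B) (P : PoissonBracket k C)
    (LA : PoissonBracket At BA)
    (f : C →ₐ[k] B) (hf : ∀ a b, f (P.br a b) = L.br (f a) (f b))
    (ιB : B →+* BA) (ιC : C →+* CA)
    (hLA : ∀ x y : B, LA.br (ιB x) (ιB y) = ιB (L.br x y))
    (t : At) (ht2 : t * t = 0)
    (hinj : ∀ x : B, t • ιB x = 0 → x = 0)
    (Phi Phi' : CA →+* BA)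
    (hred : ∀ a : C, t • Phi (ιC a) = t • ιB (f a))
    (Q : C → B)
    (hQadd : ∀ a b, Q (a + b) = Q a + Q b)
    (hQsmul : ∀ (r : k) (a : C), Q (r • a) = r • Q a)
    (hQleib : ∀ a b, Q (a * b) = f a * Q b + f b * Q a)
    (hQ : ∀ a : C, Phi' (ιC a) - Phi (ιC a) = t • ιB (Q a))
    (Pe Pe' : C → C → B)
    (hPe : ∀ a b : C,
      Phi (ιC (P.br a b)) - LA.br (Phi (ιC a)) (Phi (ιC b)) = t • ιB (Pe a b))
    (hPe' : ∀ a b : C,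
      Phi' (ιC (P.br a b)) - LA.br (Phi' (ιC a)) (Phi' (ιC b)) = t • ιB (Pe' a b)) :
    ∀ a b : C, Pe' a b - Pe a b
      = -(L.br (Q a) (f b) + L.br (f a) (Q b) - Q (P.br a b)) := by
  intro a b
  have aR : ∀ x y z : BA, LA.br x (y + z) = LA.br x y + LA.br x z := by
    intro x y z
    rw [LA.antisymm x (y + z), LA.add_left, LA.antisymm y x, LA.antisymm z x]; ring
  have sR : ∀ (r : At) (x y : BA), LA.br x (r • y) = r • LA.br x y := by
    intro r x y
    rw [LA.antisymm x (r • y), LA.smul_left, LA.antisymm y x, smul_neg, neg_neg]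
  have hsub : ∀ x : C, Phi' (ιC x) = Phi (ιC x) + t • ιB (Q x) := by
    intro x; linear_combination hQ x
  have cross1 : t • LA.br (ιB (Q a)) (Phi (ιC b)) = t • ιB (L.br (Q a) (f b)) := by
    rw [← sR, hred b, sR, hLA]
  have c2a : t • LA.br (ιB (Q b)) (Phi (ιC a)) = t • ιB (L.br (Q b) (f a)) := by
    rw [← sR, hred a, sR, hLA]
  have cross2 : t • LA.br (Phi (ιC a)) (ιB (Q b)) = t • ιB (L.br (f a) (Q b)) := by
    rw [LA.antisymm, smul_neg, c2a, ← smul_neg, ← map_neg, ← L.antisymm]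
  have expand : LA.br (Phi' (ιC a)) (Phi' (ιC b)) = LA.br (Phi (ιC a)) (Phi (ιC b))
      + t • ιB (L.br (Q a) (f b)) + t • ιB (L.br (f a) (Q b)) := by
    rw [hsub a, hsub b, aR, LA.add_left, LA.add_left,
      LA.smul_left t (ιB (Q a)) (Phi (ιC b)),
      sR t (Phi (ιC a)) (ιB (Q b)),
      LA.smul_left t (ιB (Q a)) (t • ιB (Q b)), sR, smul_smul, ht2, zero_smul,
      cross1, cross2]
    ring
  have key : t • ιB (Pe' a b) = t • ιB (Pe a b) + t • ιB (Q (P.br a b))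
      - t • ιB (L.br (Q a) (f b)) - t • ιB (L.br (f a) (Q b)) := by
    rw [← hPe' a b, hsub (P.br a b), expand, ← hPe a b]; ring
  have h0 : t • ιB (Pe' a b - Pe a b
      + (L.br (Q a) (f b) + L.br (f a) (Q b) - Q (P.br a b))) = 0 := by
    simp only [map_add, map_sub, smul_add, smul_sub]
    rw [key]; ring
  have := hinj _ h0
  linear_combination this
end

section
/- Let 0→(t)→Ã→A→0 be a small extension of local artinian k-algebras, (C,Π) and (B,Λ) Poisson k-algebras, Φ: C⊗A → B⊗A a Poisson A-homomorphism lifting a Poisson homomorphism f:(C,Π)→(B,Λ), and Φ̃: C⊗Ã → B⊗Ã an Ã-algebra homomorphism lifting Φ. Define P ∈ Hom_C(∧²Ω_{C/k},B) by Φ̃(Π(a,b)) − Λ(Φ̃(a),Φ̃(b)) = tP(a,b). Then π(P) = 0, where π(P)(a,b,c) = Λ(P(a,b),f(c)) − Λ(P(a,c),f(b)) + Λ(P(b,c),f(a)) + P(Π(a,b),c) − P(Π(a,c),b) + P(Π(b,c),a). -/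
/-!
Multiplying by `t` (injective on `B`) turns `π(P)` into the same expression built from
`Φ̃ ∘ ι` and its bracket defect `D(a,b) = Φ̃(Π(a,b)) − Λ(Φ̃a,Φ̃b) = tP(a,b)`: the only point is
that `t · Λ(P(a,b), f c) = Λ(tP(a,b), Φ̃c)`, because `t · f(c) = t · Φ̃(c)`. For the defect of any
additive map between Poisson algebras this expression vanishes, all bracket terms cancelling in
pairs except the two Jacobi sums.
-/

namespace PoissonBracket

variable {R₀ R : Type*} [CommRing R₀] [CommRing R] [Algebra R₀ R] (Pb : PoissonBracket R₀ R)

lemma sub_left (a b c : R) : Pb.br (a - b) c = Pb.br a c - Pb.br b c := by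
  have h := Pb.add_left (a - b) b c
  rw [sub_add_cancel] at h
  rw [h, add_sub_cancel_right]

lemma neg_left (a b : R) : Pb.br (-a) b = -Pb.br a b := by
  simpa using Pb.smul_left (-1) a b

lemma neg_right (a b : R) : Pb.br a (-b) = -Pb.br a b := by
  rw [Pb.antisymm, Pb.neg_left, Pb.antisymm b a, neg_neg]

lemma smul_right (r : R₀) (a b : R) : Pb.br a (r • b) = r • Pb.br a b := by
  rw [Pb.antisymm, Pb.smul_left, Pb.antisymm b a, smul_neg, neg_neg]

lemma jacobi_left (a b c : R) :
    Pb.br (Pb.br a b) c - Pb.br (Pb.br a c) b + Pb.br (Pb.br b c) a = 0 := by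
  linear_combination -Pb.jacobi a b c + Pb.antisymm (Pb.br a b) c - Pb.antisymm (Pb.br a c) b
    + Pb.antisymm (Pb.br b c) a + Pb.neg_right b (Pb.br c a) + congrArg (Pb.br b) (Pb.antisymm a c)

end PoissonBracket

section Defect

variable {R₀ R S₀ S : Type*} [CommRing R₀] [CommRing R] [Algebra R₀ R]
  [CommRing S₀] [CommRing S] [Algebra S₀ S] (Pr : PoissonBracket R₀ R) (Ps : PoissonBracket S₀ S)

def poissonDifferential (f : R → S) (Q : R → R → S) (a b c : R) : S :=
  Ps.br (Q a b) (f c) - Ps.br (Q a c) (f b) + Ps.br (Q b c) (f a)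
    + Q (Pr.br a b) c - Q (Pr.br a c) b + Q (Pr.br b c) a

def bracketDefect (Φ : R → S) (a b : R) : S :=
  Φ (Pr.br a b) - Ps.br (Φ a) (Φ b)

theorem poissonDifferential_bracketDefect (Φ : R →+ S) (a b c : R) :
    poissonDifferential Pr Ps Φ (bracketDefect Pr Ps Φ) a b c = 0 := by
  have hR := congrArg Φ (Pr.jacobi_left a b c)
  simp only [map_add, map_sub, map_zero] at hR
  simp only [poissonDifferential, bracketDefect, Ps.sub_left]
  linear_combination hR - Ps.jacobi_left (Φ a) (Φ b) (Φ c)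

end Defect

theorem stmt5_general
    {k B C At BA CA : Type*} [Field k]
    [CommRing B] [CommRing C] [Algebra k B] [Algebra k C]
    [CommRing At] [CommRing BA] [CommRing CA] [Algebra At BA]
    (L : PoissonBracket k B) (P : PoissonBracket k C)
    (LA : PoissonBracket At BA)
    (f : C →ₐ[k] B)
    (ιB : B →+* BA) (ιC : C →+* CA)
    (hLA : ∀ x y : B, LA.br (ιB x) (ιB y) = ιB (L.br x y))
    (t : At)
    (hinj : ∀ x : B, t • ιB x = 0 → x = 0)
    (Phi : CA →+* BA)
    -- `Φ̃` induces `f` modulo the maximal ideal: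
    (hred : ∀ a : C, t • Phi (ιC a) = t • ιB (f a))
    (Pe : C → C → B)
    (hPe : ∀ a b : C,
      Phi (ιC (P.br a b)) - LA.br (Phi (ιC a)) (Phi (ιC b)) = t • ιB (Pe a b)) :
    ∀ a b c : C,
      L.br (Pe a b) (f c) - L.br (Pe a c) (f b) + L.br (Pe b c) (f a)
        + Pe (P.br a b) c - Pe (P.br a c) b + Pe (P.br b c) a = 0 := by
  intro a b c
  let Φ : C →+ BA := (Phi.comp ιC).toAddMonoidHom
  have hdefect : ∀ x y, t • ιB (Pe x y) = bracketDefect P LA Φ x y := fun x y => (hPe x y).symm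
  have hbr : ∀ x y z, t • ιB (L.br (Pe x y) (f z)) = LA.br (bracketDefect P LA Φ x y) (Φ z) := by
    intro x y z
    calc t • ιB (L.br (Pe x y) (f z))
        = LA.br (ιB (Pe x y)) (t • ιB (f z)) := by rw [← hLA, LA.smul_right]
      _ = LA.br (t • ιB (Pe x y)) (Φ z) := by rw [← hred, LA.smul_right, LA.smul_left]; rfl
      _ = LA.br (bracketDefect P LA Φ x y) (Φ z) := by rw [hdefect]
  refine hinj _ ?_
  change t • ιB (poissonDifferential P L f Pe a b c) = 0
  rw [← poissonDifferential_bracketDefect P LA Φ a b c]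
  simp only [poissonDifferential, map_add, map_sub, smul_add, smul_sub, hbr, hdefect]

theorem stmt5
    {k B C At BA CA : Type*} [Field k]
    [CommRing B] [CommRing C] [Algebra k B] [Algebra k C]
    [CommRing At] [CommRing BA] [CommRing CA] [Algebra At BA] [Algebra At CA]
    (L : PoissonBracket k B) (P : PoissonBracket k C)
    (LA : PoissonBracket At BA) (PA : PoissonBracket At CA)
    (f : C →ₐ[k] B) (hf : ∀ a b, f (P.br a b) = L.br (f a) (f b))
    (ιB : B →+* BA) (ιC : C →+* CA)
    (hLA : ∀ x y : B, LA.br (ιB x) (ιB y) = ιB (L.br x y))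
    (hPA : ∀ a b : C, PA.br (ιC a) (ιC b) = ιC (P.br a b))
    (t : At) (ht2 : t * t = 0)
    (hinj : ∀ x : B, t • ιB x = 0 → x = 0)
    (Phi : CA →+* BA)
    (hPhilin : ∀ (s : At) (x : CA), Phi (s • x) = s • Phi x)
    -- `Φ̃` lifts the Poisson `A`-homomorphism `Φ`:
    (herr : ∀ x y : CA, t • (Phi (PA.br x y) - LA.br (Phi x) (Phi y)) = 0)
    -- `Φ̃` induces `f` modulo the maximal ideal:
    (hred : ∀ a : C, t • Phi (ιC a) = t • ιB (f a))
    (Pe : C → C → B)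
    (hPe : ∀ a b : C,
      Phi (ιC (P.br a b)) - LA.br (Phi (ιC a)) (Phi (ιC b)) = t • ιB (Pe a b)) :
    ∀ a b c : C,
      L.br (Pe a b) (f c) - L.br (Pe a c) (f b) + L.br (Pe b c) (f a)
        + Pe (P.br a b) c - Pe (P.br a c) b + Pe (P.br b c) a = 0 :=
  stmt5_general L P LA f ιB ιC hLA t hinj Phi hred Pe hPe
end

section
/- In the setting of two liftings Φ̃_i, Φ̃_j over Ã of a Poisson A-homomorphism leaving domain and target fixed, on overlaps: if Φ̃_j − Φ̃_i = tξ_{ij} with ξ_{ij} ∈ Der_k(C,B), and tP_i = Φ̃_i^*Π − Φ̃_iΛ, tP_j = Φ̃_j^*Π − Φ̃_jΛ, then P_j − P_i + π(ξ_{ij}) = 0, where π(ξ)(a,b) = Λ(ξ(a),f(b)) + Λ(f(a),ξ(b)) − ξ(Π(a,b)). -/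
/-!
STATEMENT 6.  Two local liftings `Φ̃_i, Φ̃_j` (over `Ã`, small extension with kernel `(t)`)
of the same Poisson `A`-homomorphism with fixed domain and target; on overlaps
`Φ̃_j − Φ̃_i = tξ_{ij}` with `ξ_{ij} ∈ Der_k(C,B)`, and `tP_i = Φ̃_i^*Π − Φ̃_iΛ`,
`tP_j = Φ̃_j^*Π − Φ̃_jΛ`.  Then `P_j − P_i + π(ξ_{ij}) = 0`.
-/
theorem stmt6
    {k B C At BA CA : Type*} [Field k]
    [CommRing B] [CommRing C] [Algebra k B] [Algebra k C]
    [CommRing At] [CommRing BA] [CommRing CA] [Algebra At BA] [Algebra At CA]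
    (L : PoissonBracket k B) (P : PoissonBracket k C)
    (LA : PoissonBracket At BA)
    (f : C →ₐ[k] B) (hf : ∀ a b, f (P.br a b) = L.br (f a) (f b))
    (ιB : B →+* BA) (ιC : C →+* CA)
    (hLA : ∀ x y : B, LA.br (ιB x) (ιB y) = ιB (L.br x y))
    (t : At) (ht2 : t * t = 0)
    (hinj : ∀ x : B, t • ιB x = 0 → x = 0)
    (Phi_i Phi_j : CA →+* BA)
    (hred : ∀ a : C, t • Phi_i (ιC a) = t • ιB (f a))
    (ξ : C → B)
    (hξadd : ∀ a b, ξ (a + b) = ξ a + ξ b)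
    (hξsmul : ∀ (r : k) (a : C), ξ (r • a) = r • ξ a)
    (hξleib : ∀ a b, ξ (a * b) = f a * ξ b + f b * ξ a)
    (hξ : ∀ a : C, Phi_j (ιC a) - Phi_i (ιC a) = t • ιB (ξ a))
    (Pe_i Pe_j : C → C → B)
    (hPei : ∀ a b : C,
      Phi_i (ιC (P.br a b)) - LA.br (Phi_i (ιC a)) (Phi_i (ιC b)) = t • ιB (Pe_i a b))
    (hPej : ∀ a b : C,
      Phi_j (ιC (P.br a b)) - LA.br (Phi_j (ιC a)) (Phi_j (ιC b)) = t • ιB (Pe_j a b)) :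
    ∀ a b : C, Pe_j a b - Pe_i a b
      + (L.br (ξ a) (f b) + L.br (f a) (ξ b) - ξ (P.br a b)) = 0 := by
  have add_right : ∀ x y z : BA, LA.br x (y + z) = LA.br x y + LA.br x z := by
    intro x y z
    rw [LA.antisymm, LA.add_left, neg_add, ← LA.antisymm, ← LA.antisymm]
  have smul_right : ∀ (r : At) (x y : BA), LA.br x (r • y) = r • LA.br x y := by
    intro r x y
    rw [LA.antisymm, LA.smul_left, ← smul_neg, ← LA.antisymm]
  intro a b
  apply hinj
  have hja : Phi_j (ιC a) = Phi_i (ιC a) + t • ιB (ξ a) := by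
    have h := hξ a; rw [sub_eq_iff_eq_add] at h; rw [h]; abel
  have hjb : Phi_j (ιC b) = Phi_i (ιC b) + t • ιB (ξ b) := by
    have h := hξ b; rw [sub_eq_iff_eq_add] at h; rw [h]; abel
  have hbrj : LA.br (Phi_j (ιC a)) (Phi_j (ιC b))
      = LA.br (Phi_i (ιC a)) (Phi_i (ιC b))
        + t • ιB (L.br (f a) (ξ b)) + t • ιB (L.br (ξ a) (f b)) := by
    rw [hja, hjb, LA.add_left, add_right, add_right, smul_right, LA.smul_left,
      LA.smul_left, smul_right]
    have h0 : t • (t • LA.br (ιB (ξ a)) (ιB (ξ b))) = 0 := by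
      rw [smul_smul, ht2, zero_smul]
    have hXB : t • LA.br (ιB (ξ a)) (Phi_i (ιC b)) = t • ιB (L.br (ξ a) (f b)) := by
      rw [← smul_right, hred b, smul_right, hLA]
    have hAY : t • LA.br (Phi_i (ιC a)) (ιB (ξ b)) = t • ιB (L.br (f a) (ξ b)) := by
      rw [LA.antisymm, smul_neg, ← smul_right, hred a, smul_right, hLA, ← smul_neg,
        ← map_neg, ← L.antisymm]
    rw [h0, hXB, hAY]; abel
  have key : t • ιB (Pe_j a b) - t • ιB (Pe_i a b)
      = t • ιB (ξ (P.br a b)) - t • ιB (L.br (f a) (ξ b)) - t • ιB (L.br (ξ a) (f b)) := by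
    rw [← hPej a b, ← hPei a b, hbrj, ← hξ (P.br a b)]
    abel
  have expand : t • ιB (Pe_j a b - Pe_i a b
      + (L.br (ξ a) (f b) + L.br (f a) (ξ b) - ξ (P.br a b)))
      = (t • ιB (Pe_j a b) - t • ιB (Pe_i a b))
        + (t • ιB (L.br (ξ a) (f b)) + t • ιB (L.br (f a) (ξ b))
          - t • ιB (ξ (P.br a b))) := by
    simp only [map_add, map_sub, smul_add, smul_sub]
  rw [expand, key]; abel
end

section
/- Let (X,Λ₀) → (Y,Π₀) be a non-degenerate holomorphic Poisson map f of compact holomorphic Poisson manifolds, i.e. the canonical chain map F: Θ_X^• → f^*Θ_Y^• of complexes of sheaves is injective, so that 0 → Θ_X^• → f^*Θ_Y^• → 𝒩_f^• → 0 is a short exact sequence of complexes of sheaves. Then there is a natural isomorphism PD_{(X,Λ₀)/(Y,Π₀)} ≅ ℍ⁰(X, 𝒩_f^•), where PD is defined by the Čech hyper-complex description with triples (τ,ρ,λ) ∈ C⁰(𝒰,f^*Θ_Y) ⊕ C¹(𝒰,Θ_X) ⊕ C⁰(𝒰,∧²Θ_X) satisfying −δτ = Fρ, π(τ) = Fλ,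 δρ = 0, δλ + [Λ₀,ρ] = 0, [Λ₀,λ] = 0, modulo (Fg, −δg, [Λ₀,g]). -/
/-!
STATEMENT 8.  For a non-degenerate holomorphic Poisson map `f : (X,Λ₀) → (Y,Π₀)`, i.e.
the canonical chain map `F : Θ_X^• → f^*Θ_Y^•` is injective, so that
`0 → Θ_X^• → f^*Θ_Y^• → 𝒩_f^• → 0` is exact, there is a natural isomorphism
`PD_{(X,Λ₀)/(Y,Π₀)} ≅ ℍ⁰(X, 𝒩_f^•)`.

Čech model: `X p q = C^p(𝒰,∧^q Θ_X)`, `Y p q = C^p(𝒰,∧^q f^*Θ_Y)`,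
`N p q = C^p(𝒰,∧^q 𝒩_f)` with Čech differential `δ`, differentials `dX = [Λ₀,−]`,
`dY = π`, `dN`, chain maps `F` and projection `Pr`, with
`0 → X → Y → N → 0` exact in each bidegree.  `PD` is given by triples
`(v,t,λ)` with `−δv = Ft`, `π(v) = Fλ`, `δt = 0`, `δλ + [Λ₀,t] = 0`, `[Λ₀,λ] = 0`
modulo `(Fg, −δg, [Λ₀,g])`; the conclusion says that `(v,t,λ) ↦ [Pr v]` is a bijection
of `PD` onto `ℍ⁰(X,𝒩_f^•)` (injectivity and surjectivity on classes).
-/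
theorem stmt8
    (X Y N : ℕ → ℕ → Type*)
    [∀ p q, AddCommGroup (X p q)] [∀ p q, AddCommGroup (Y p q)]
    [∀ p q, AddCommGroup (N p q)]
    (δX : ∀ p q, X p q →+ X (p + 1) q) (dX : ∀ p q, X p q →+ X p (q + 1))
    (δY : ∀ p q, Y p q →+ Y (p + 1) q) (dY : ∀ p q, Y p q →+ Y p (q + 1))
    (δN : ∀ p q, N p q →+ N (p + 1) q) (dN : ∀ p q, N p q →+ N p (q + 1))
    (F : ∀ p q, X p q →+ Y p q) (Pr : ∀ p q, Y p q →+ N p q)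
    (hδδX : ∀ p q (x : X p q), δX (p + 1) q (δX p q x) = 0)
    (hddX : ∀ p q (x : X p q), dX p (q + 1) (dX p q x) = 0)
    (hcX : ∀ p q (x : X p q), δX p (q + 1) (dX p q x) = dX (p + 1) q (δX p q x))
    (hδδY : ∀ p q (y : Y p q), δY (p + 1) q (δY p q y) = 0)
    (hddY : ∀ p q (y : Y p q), dY p (q + 1) (dY p q y) = 0)
    (hcY : ∀ p q (y : Y p q), δY p (q + 1) (dY p q y) = dY (p + 1) q (δY p q y))
    (hFδ : ∀ p q (x : X p q), F (p + 1) q (δX p q x) = δY p q (F p q x))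
    (hFd : ∀ p q (x : X p q), F p (q + 1) (dX p q x) = dY p q (F p q x))
    (hPδ : ∀ p q (y : Y p q), Pr (p + 1) q (δY p q y) = δN p q (Pr p q y))
    (hPd : ∀ p q (y : Y p q), Pr p (q + 1) (dY p q y) = dN p q (Pr p q y))
    -- non-degeneracy and exactness of `0 → Θ_X^• → f^*Θ_Y^• → 𝒩_f^• → 0`:
    (hFinj : ∀ p q, Function.Injective (F p q))
    (hker : ∀ p q (y : Y p q), Pr p q y = 0 ↔ ∃ x, y = F p q x)
    (hPsurj : ∀ p q, Function.Surjective (Pr p q)) :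
    -- `PD_{(X,Λ₀)/(Y,Π₀)} → ℍ⁰(X,𝒩_f^•)`, `(v,t,λ) ↦ Pr v`, is injective on classes …
    ((∀ (v : Y 0 1) (s : X 1 1) (l : X 0 2),
        δY 0 1 v = -F 1 1 s → dY 0 1 v = F 0 2 l →
        δX 1 1 s = 0 → δX 0 2 l + dX 1 1 s = 0 → dX 0 2 l = 0 →
        Pr 0 1 v = 0 →
        ∃ w : X 0 1, v = F 0 1 w ∧ s = -δX 0 1 w ∧ l = dX 0 1 w)
    ∧ -- … and surjective onto classes:
      (∀ n : N 0 1, δN 0 1 n = 0 → dN 0 1 n = 0 →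
        ∃ (v : Y 0 1) (s : X 1 1) (l : X 0 2),
          δY 0 1 v = -F 1 1 s ∧ dY 0 1 v = F 0 2 l ∧
          δX 1 1 s = 0 ∧ δX 0 2 l + dX 1 1 s = 0 ∧ dX 0 2 l = 0 ∧
          Pr 0 1 v = n)) := by

  have hF0 : ∀ p q (x : X p q), F p q x = 0 → x = 0 := by
    intro p q x hx
    exact hFinj p q (by simpa using hx)
  constructor
  · intro v s l h1 h2 h3 h4 h5 h6
    obtain ⟨w, hw⟩ := (hker 0 1 v).mp h6
    refine ⟨w, hw, ?_, ?_⟩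
    · apply hFinj _ _
      rw [map_neg, hFδ, ← hw, h1, neg_neg]
    · apply hFinj _ _
      rw [hFd, ← hw, h2]
  · intro n hδn hdn
    obtain ⟨v, hv⟩ := hPsurj 0 1 n
    obtain ⟨s', hs'⟩ := (hker 1 1 (δY 0 1 v)).mp (by rw [hPδ, hv, hδn])
    obtain ⟨l, hl⟩ := (hker 0 2 (dY 0 1 v)).mp (by rw [hPd, hv, hdn])
    have hA : F 2 1 (δX 1 1 (-s')) = δY 1 1 (F 1 1 (-s')) := hFδ 1 1 (-s')
    have hB : δY 1 1 (δY 0 1 v) = 0 := hδδY 0 1 v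
    have hC : F 1 2 (δX 0 2 l) = δY 0 2 (F 0 2 l) := hFδ 0 2 l
    have hD : F 1 2 (dX 1 1 (-s')) = dY 1 1 (F 1 1 (-s')) := hFd 1 1 (-s')
    have hE : δY 0 2 (dY 0 1 v) = dY 1 1 (δY 0 1 v) := hcY 0 1 v
    have hG : F 0 3 (dX 0 2 l) = dY 0 2 (F 0 2 l) := hFd 0 2 l
    have hH : dY 0 2 (dY 0 1 v) = 0 := hddY 0 1 v
    refine ⟨v, -s', l, by rw [hs', map_neg, neg_neg], hl, ?_, ?_, ?_, hv⟩
    · apply hF0 2 1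
      rw [hA, map_neg, ← hs', map_neg, hB, neg_zero]
    · apply hF0 1 2
      rw [map_add, hC, hD, map_neg, ← hs', ← hl, hE, map_neg, add_neg_cancel]
    · apply hF0 0 3
      rw [hG, ← hl, hH]
end

section
/- Let f:(X,Λ₀)→(Y,Π₀) be a Poisson morphism of nonsingular Poisson varieties. With T_{X/Y}^• = ker(F) and N_f^• = coker(F), there is an exact sequence 0 → ℍ¹(X, T_{X/Y}^•) → PD_{(X,Λ₀)/(Y,Π₀)} → ℍ⁰(X, N_f^•) → ℍ²(X, T_{X/Y}^•). -/
/-!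
STATEMENT 10.  Čech model of the exact sequence
`0 → ℍ¹(X,T_{X/Y}^•) → PD_{(X,Λ₀)/(Y,Π₀)} → ℍ⁰(X,N_f^•) → ℍ²(X,T_{X/Y}^•)`
attached to the exact sequence of complexes
`0 → T_{X/Y}^• →J T_X^• →F f^*T_Y^• →Pr N_f^• → 0`.
`Z p q = C^p(𝒰,∧^q T_{X/Y})`, `X p q = C^p(𝒰,∧^q T_X)`, `Y p q = C^p(𝒰,∧^q f^*T_Y)`,
`N p q = C^p(𝒰,∧^q N_f)`.  Exactness is expressed element-wise on cocycle
representatives; the connecting map `ℍ⁰(N_f^•) → ℍ²(T_{X/Y}^•)` is realized through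
an arbitrary choice of lifts, as in the paper.
-/
theorem stmt10
    (Z X Y N : ℕ → ℕ → Type*)
    [∀ p q, AddCommGroup (Z p q)] [∀ p q, AddCommGroup (X p q)]
    [∀ p q, AddCommGroup (Y p q)] [∀ p q, AddCommGroup (N p q)]
    (δZ : ∀ p q, Z p q →+ Z (p + 1) q) (dZ : ∀ p q, Z p q →+ Z p (q + 1))
    (δX : ∀ p q, X p q →+ X (p + 1) q) (dX : ∀ p q, X p q →+ X p (q + 1))
    (δY : ∀ p q, Y p q →+ Y (p + 1) q) (dY : ∀ p q, Y p q →+ Y p (q + 1))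
    (δN : ∀ p q, N p q →+ N (p + 1) q) (dN : ∀ p q, N p q →+ N p (q + 1))
    (J : ∀ p q, Z p q →+ X p q) (F : ∀ p q, X p q →+ Y p q) (Pr : ∀ p q, Y p q →+ N p q)
    (hδδX : ∀ p q (x : X p q), δX (p + 1) q (δX p q x) = 0)
    (hddX : ∀ p q (x : X p q), dX p (q + 1) (dX p q x) = 0)
    (hcX : ∀ p q (x : X p q), δX p (q + 1) (dX p q x) = dX (p + 1) q (δX p q x))
    (hδδY : ∀ p q (y : Y p q), δY (p + 1) q (δY p q y) = 0)
    (hddY : ∀ p q (y : Y p q), dY p (q + 1) (dY p q y) = 0)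
    (hcY : ∀ p q (y : Y p q), δY p (q + 1) (dY p q y) = dY (p + 1) q (δY p q y))
    (hJδ : ∀ p q (z : Z p q), J (p + 1) q (δZ p q z) = δX p q (J p q z))
    (hJd : ∀ p q (z : Z p q), J p (q + 1) (dZ p q z) = dX p q (J p q z))
    (hFδ : ∀ p q (x : X p q), F (p + 1) q (δX p q x) = δY p q (F p q x))
    (hFd : ∀ p q (x : X p q), F p (q + 1) (dX p q x) = dY p q (F p q x))
    (hPδ : ∀ p q (y : Y p q), Pr (p + 1) q (δY p q y) = δN p q (Pr p q y))
    (hPd : ∀ p q (y : Y p q), Pr p (q + 1) (dY p q y) = dN p q (Pr p q y))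
    -- exactness of `0 → T_{X/Y}^• → T_X^• → f^*T_Y^• → N_f^• → 0`:
    (hJinj : ∀ p q, Function.Injective (J p q))
    (hkerF : ∀ p q (x : X p q), F p q x = 0 ↔ ∃ z, x = J p q z)
    (hkerP : ∀ p q (y : Y p q), Pr p q y = 0 ↔ ∃ x, y = F p q x)
    (hPsurj : ∀ p q, Function.Surjective (Pr p q)) :
    -- exactness at ℍ¹(T_{X/Y}^•) (injectivity of `ℍ¹(T_{X/Y}^•) → PD`, `(ψ,φ) ↦ (0,Jψ,Jφ)`)
    ((∀ (ψ : Z 1 1) (φ : Z 0 2),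
        δZ 1 1 ψ = 0 → δZ 0 2 φ + dZ 1 1 ψ = 0 → dZ 0 2 φ = 0 →
        (∃ w : X 0 1, F 0 1 w = 0 ∧ J 1 1 ψ = -δX 0 1 w ∧ J 0 2 φ = dX 0 1 w) →
        ∃ z : Z 0 1, ψ = -δZ 0 1 z ∧ φ = dZ 0 1 z)
    ∧ -- exactness at PD
      (∀ (v : Y 0 1) (s : X 1 1) (l : X 0 2),
        δY 0 1 v = -F 1 1 s → dY 0 1 v = F 0 2 l →
        δX 1 1 s = 0 → δX 0 2 l + dX 1 1 s = 0 → dX 0 2 l = 0 →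
        (Pr 0 1 v = 0 ↔
          ∃ (ψ : Z 1 1) (φ : Z 0 2) (w : X 0 1),
            δZ 1 1 ψ = 0 ∧ δZ 0 2 φ + dZ 1 1 ψ = 0 ∧ dZ 0 2 φ = 0 ∧
            v = F 0 1 w ∧ s - J 1 1 ψ = -δX 0 1 w ∧ l - J 0 2 φ = dX 0 1 w))
    ∧ -- exactness at ℍ⁰(N_f^•)
      (∀ n : N 0 1, δN 0 1 n = 0 → dN 0 1 n = 0 →
        ((∃ (v : Y 0 1) (s : X 1 1) (r : X 0 2)
            (za : Z 2 1) (zb : Z 1 2) (zc : Z 0 3),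
            Pr 0 1 v = n ∧ F 1 1 s = -δY 0 1 v ∧ F 0 2 r = dY 0 1 v ∧
            J 2 1 za = δX 1 1 s ∧ J 1 2 zb = δX 0 2 r + dX 1 1 s ∧ J 0 3 zc = dX 0 2 r ∧
            ∃ (α : Z 1 1) (β : Z 0 2),
              za = δZ 1 1 α ∧ zb = δZ 0 2 β + dZ 1 1 α ∧ zc = dZ 0 2 β) ↔
          (∃ (v : Y 0 1) (s : X 1 1) (l : X 0 2),
            δY 0 1 v = -F 1 1 s ∧ dY 0 1 v = F 0 2 l ∧
            δX 1 1 s = 0 ∧ δX 0 2 l + dX 1 1 s = 0 ∧ dX 0 2 l = 0 ∧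
            Pr 0 1 v = n)))) := by

  have hFJ : ∀ p q (z : Z p q), F p q (J p q z) = 0 := fun p q z =>
    (hkerF p q (J p q z)).2 ⟨z, rfl⟩
  refine ⟨?_, ?_, ?_⟩
  · -- exactness at ℍ¹
    rintro ψ φ h1 h2 h3 ⟨w, hw0, hw1, hw2⟩
    obtain ⟨z, hz⟩ := (hkerF 0 1 w).1 hw0
    refine ⟨z, hJinj 1 1 ?_, hJinj 0 2 ?_⟩
    · rw [map_neg, hJδ, ← hz, ← hw1]
    · rw [hJd, ← hz, ← hw2]
  · -- exactness at PD
    rintro v s l hv1 hv2 hs1 hs2 hs3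
    constructor
    · intro hPv
      obtain ⟨w, hw⟩ := (hkerP 0 1 v).1 hPv
      obtain ⟨ψ, hψ⟩ := (hkerF 1 1 (s + δX 0 1 w)).1 (by
        rw [map_add, hFδ, ← hw, hv1]; abel)
      obtain ⟨φ, hφ⟩ := (hkerF 0 2 (l - dX 0 1 w)).1 (by
        rw [map_sub, hFd, ← hw, ← hv2, sub_self])
      refine ⟨ψ, φ, w, hJinj 2 1 ?_, hJinj 1 2 ?_, hJinj 0 3 ?_, hw, ?_, ?_⟩
      · rw [hJδ, ← hψ, map_add, hδδX, map_zero, add_zero, hs1]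
      · rw [map_add, map_zero, hJδ, hJd, ← hψ, ← hφ, map_sub, map_add,
          hcX 0 1 w]
        abel_nf
        rw [hs2]
      · rw [map_zero, hJd, ← hφ, map_sub, hddX, sub_zero, hs3]
      · rw [← hψ]; abel
      · rw [← hφ]; abel
    · rintro ⟨ψ, φ, w, _, _, _, hvw, _, _⟩
      rw [hvw]
      exact (hkerP 0 1 (F 0 1 w)).2 ⟨w, rfl⟩
  · -- exactness at ℍ⁰(N_f^•)
    rintro n hn1 hn2
    constructor
    · rintro ⟨v, s, r, za, zb, zc, hPv, hFs, hFr, hza, hzb, hzc, α, β, hα, hβ, hγ⟩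
      refine ⟨v, s - J 1 1 α, r - J 0 2 β, ?_, ?_, ?_, ?_, ?_, hPv⟩
      · rw [map_sub, hFJ, sub_zero, hFs, neg_neg]
      · rw [map_sub, hFJ, sub_zero, hFr]
      · rw [map_sub, ← hJδ, ← hα, hza, sub_self]
      · have key : δX 0 2 r + dX 1 1 s
            = δX 0 2 (J 0 2 β) + dX 1 1 (J 1 1 α) := by
          rw [← hJδ, ← hJd, ← map_add, ← hβ, hzb]
        rw [map_sub, map_sub, sub_add_sub_comm, key, sub_self]
      · rw [map_sub, ← hJd, ← hγ, hzc, sub_self]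
    · rintro ⟨v, s, l, h1, h2, h3, h4, h5, h6⟩
      refine ⟨v, s, l, 0, 0, 0, h6, ?_, ?_, ?_, ?_, ?_, 0, 0, ?_, ?_, ?_⟩
      · rw [h1, neg_neg]
      · rw [h2]
      · rw [map_zero, h3]
      · rw [map_zero, h4]
      · rw [map_zero, h5]
      · rw [map_zero]
      · rw [map_zero, map_zero, add_zero]
      · rw [map_zero]
end

section
/- Obstruction to lifting deformations of a Poisson morphism with fixed domain and target: given an infinitesimal deformation ξ of f over A ∈ Art leaving domain and target fixed and a small extension e: 0→(t)→Ã→A→0, the pair of Čech data (P = {P_i}, ξ' = {ξ_{ij}}) constructed from arbitrary local liftings Φ̃_i satisfies π(P_i) = 0 and P_j − P_i + π(ξ_{ij}) = 0 and δ(ξ') = 0, hence defines a class o_ξ(e) ∈ ℍ¹(X, f^*T_Y^•), independent of the choice of liftings, which vanishes if and only if ξ lifts to Ã. -/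
/-- A derivation `C → B` over `f` (a section of `f^*T_Y`). -/
def DerOverF {k C B : Type*} [CommSemiring k] [CommRing C] [CommRing B]
    [Algebra k C] [Algebra k B] (f : C →ₐ[k] B) (v : C → B) : Prop :=
  (∀ a b, v (a + b) = v a + v b) ∧ (∀ (r : k) (a : C), v (r • a) = r • v a) ∧
  (∀ a b, v (a * b) = f a * v b + f b * v a)

section PBLemmas

variable {R₀ R : Type*} [CommRing R₀] [CommRing R] [Algebra R₀ R]
  (Pb : PoissonBracket R₀ R)

lemma pb_zero_left (b : R) : Pb.br 0 b = 0 := by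
  have h := Pb.smul_left 0 0 b
  simpa using h

lemma pb_zero_right (a : R) : Pb.br a 0 = 0 := by
  rw [Pb.antisymm, pb_zero_left, neg_zero]

lemma pb_neg_left (a b : R) : Pb.br (-a) b = -Pb.br a b := by
  have h : Pb.br a b + Pb.br (-a) b = 0 := by
    rw [← Pb.add_left, add_neg_cancel, pb_zero_left]
  linear_combination h

lemma pb_neg_right (a b : R) : Pb.br a (-b) = -Pb.br a b := by
  rw [Pb.antisymm, pb_neg_left, Pb.antisymm b a]; ring

lemma pb_add_right (a b c : R) : Pb.br a (b + c) = Pb.br a b + Pb.br a c := by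
  rw [Pb.antisymm, Pb.add_left, Pb.antisymm b a, Pb.antisymm c a]; ring

lemma pb_smul_right (r : R₀) (a b : R) : Pb.br a (r • b) = r • Pb.br a b := by
  rw [Pb.antisymm, Pb.smul_left, Pb.antisymm b a, smul_neg, neg_neg]

lemma pb_sub_left (a b c : R) : Pb.br (a - b) c = Pb.br a c - Pb.br b c := by
  rw [sub_eq_add_neg, Pb.add_left, pb_neg_left, sub_eq_add_neg]

lemma pb_sub_right (a b c : R) : Pb.br a (b - c) = Pb.br a b - Pb.br a c := by
  rw [sub_eq_add_neg, pb_add_right, pb_neg_right, sub_eq_add_neg]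

lemma pb_jac3 (a b c : R) :
    Pb.br (Pb.br a b) c - Pb.br (Pb.br a c) b + Pb.br (Pb.br b c) a = 0 := by
  have h := Pb.jacobi a b c
  have e1 : Pb.br (Pb.br a b) c = - Pb.br c (Pb.br a b) := Pb.antisymm _ _
  have e2 : Pb.br (Pb.br a c) b = - Pb.br b (Pb.br a c) := Pb.antisymm _ _
  have e3 : Pb.br (Pb.br b c) a = - Pb.br a (Pb.br b c) := Pb.antisymm _ _
  have e4 : Pb.br b (Pb.br c a) = - Pb.br b (Pb.br a c) := by
    rw [Pb.antisymm c a, pb_neg_right]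
  linear_combination e1 - e2 + e3 - h + e4

end PBLemmas

theorem stmt13
    {k B C At BA CA : Type*} {ι : Type*} [Field k]
    [CommRing B] [CommRing C] [Algebra k B] [Algebra k C]
    [CommRing At] [CommRing BA] [CommRing CA] [Algebra At BA] [Algebra At CA]
    (L : PoissonBracket k B) (P : PoissonBracket k C)
    (LA : PoissonBracket At BA) (PA : PoissonBracket At CA)
    (f : C →ₐ[k] B) (hf : ∀ a b, f (P.br a b) = L.br (f a) (f b))
    (ιB : B →+* BA) (ιC : C →+* CA)
    (hLA : ∀ x y : B, LA.br (ιB x) (ιB y) = ιB (L.br x y))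
    (hPA : ∀ a b : C, PA.br (ιC a) (ιC b) = ιC (P.br a b))
    (t : At) (ht2 : t * t = 0)
    (hinj : ∀ x : B, t • ιB x = 0 → x = 0)
    -- the deformation `ξ` of `f` over `A`, with fixed domain and target:
    (Φ : CA →+* BA)
    (hΦred : ∀ a : C, t • Φ (ιC a) = t • ιB (f a))
    (hΦA : ∀ x y : CA, t • (Φ (PA.br x y) - LA.br (Φ x) (Φ y)) = 0)
    -- arbitrary local liftings of `Φ` to `Ã`:
    (Φt : ι → (CA →+* BA))
    (hΦtlin : ∀ i (s : At) (x : CA), Φt i (s • x) = s • Φt i x)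
    (hΦtlift : ∀ i (x : CA), ∃ y : BA, Φt i x - Φ x = t • y)
    -- the associated Čech data:
    (ξ : ι → ι → C → B) (Pe : ι → C → C → B)
    (hξ : ∀ i j (a : C), Φt j (ιC a) - Φt i (ιC a) = t • ιB (ξ i j a))
    (hPe : ∀ i (a b : C),
      Φt i (ιC (P.br a b)) - LA.br (Φt i (ιC a)) (Φt i (ιC b)) = t • ιB (Pe i a b)) :
    -- (1) `(P,ξ)` is a 1-cocycle of the Čech hypercomplex of `f^*T_Y^•`:
    ((∀ i (a b c : C),
        L.br (Pe i a b) (f c) - L.br (Pe i a c) (f b) + L.br (Pe i b c) (f a)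
          + Pe i (P.br a b) c - Pe i (P.br a c) b + Pe i (P.br b c) a = 0)
    ∧ (∀ i j (a b : C),
        Pe j a b - Pe i a b
          + (L.br (ξ i j a) (f b) + L.br (f a) (ξ i j b) - ξ i j (P.br a b)) = 0)
    ∧ (∀ i j l (a : C), ξ i j a - ξ i l a + ξ j l a = 0)
    -- (2) independence of the choice of liftings: a different choice changes `(P,ξ)`
    --     exactly by a coboundary:
    ∧ (∀ (Φt' : ι → (CA →+* BA)) (Q : ι → C → B)
          (ξ' : ι → ι → C → B) (Pe' : ι → C → C → B),
        (∀ i (a : C), Φt' i (ιC a) - Φt i (ιC a) = t • ιB (Q i a)) →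
        (∀ i j (a : C), Φt' j (ιC a) - Φt' i (ιC a) = t • ιB (ξ' i j a)) →
        (∀ i (a b : C),
          Φt' i (ιC (P.br a b)) - LA.br (Φt' i (ιC a)) (Φt' i (ιC b))
            = t • ιB (Pe' i a b)) →
        ((∀ i (a b : C), Pe' i a b - Pe i a b
            = -(L.br (Q i a) (f b) + L.br (f a) (Q i b) - Q i (P.br a b)))
          ∧ (∀ i j (a : C), ξ' i j a - ξ i j a = Q j a - Q i a)))
    -- (3) `o_ξ(e) = 0` (the cocycle is a coboundary) iff there is a lifting of `ξ`
    --     to `Ã`: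
    ∧ ((∃ Q : ι → C → B, (∀ i, DerOverF f (Q i)) ∧
          (∀ i (a b : C),
            Pe i a b = -(L.br (Q i a) (f b) + L.br (f a) (Q i b) - Q i (P.br a b))) ∧
          (∀ i j (a : C), ξ i j a = Q j a - Q i a))
        ↔ (∃ q : ι → C → B, (∀ i, DerOverF f (q i)) ∧
            (∀ i j (a : C),
              Φt i (ιC a) + t • ιB (q i a) = Φt j (ιC a) + t • ιB (q j a)) ∧
            (∀ i (a b : C),
              Φt i (ιC (P.br a b)) + t • ιB (q i (P.br a b))
                = LA.br (Φt i (ιC a) + t • ιB (q i a))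
                    (Φt i (ιC b) + t • ιB (q i b)))))) := by
  -- basic consequences of t² = 0
  have hts : ∀ x : BA, t • t • x = (0:BA) := fun x => by
    rw [smul_smul, ht2, zero_smul]
  have hΦt_eq : ∀ i (x : CA), t • Φt i x = t • Φ x := by
    intro i x
    obtain ⟨y, hy⟩ := hΦtlift i x
    have hx : Φt i x = Φ x + t • y := by linear_combination hy
    rw [hx, smul_add, hts, add_zero]
  have hA : ∀ i (a : C), t • (Φt i (ιC a)) = t • ιB (f a) := fun i a => by
    rw [hΦt_eq, hΦred]
  have hswap : ∀ (x v : BA), LA.br (t • x) v = LA.br x (t • v) := fun x v => by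
    rw [LA.smul_left, pb_smul_right]
  have hLz : ∀ (x v : BA), t • v = 0 → LA.br (t • x) v = 0 := fun x v hv => by
    rw [hswap, hv, pb_zero_right]
  have hrepl : ∀ (x v v' : BA), t • v = t • v' → LA.br (t • x) v = LA.br (t • x) v' := by
    intro x v v' h
    have h0 : LA.br (t • x) (v - v') = 0 := hLz _ _ (by rw [smul_sub, h, sub_self])
    rw [pb_sub_right] at h0
    linear_combination h0
  have hbr2 : ∀ (x y : BA), LA.br (t • x) (t • y) = 0 := fun x y => hLz x _ (hts y)
  have hbrL : ∀ i (x : B) (b : C),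
      t • ιB (L.br x (f b)) = LA.br (t • ιB x) (Φt i (ιC b)) := by
    intro i x b
    rw [← hLA, ← LA.smul_left]
    exact hrepl _ _ _ (hA i b).symm
  have hbrR : ∀ i (a : C) (x : B),
      t • ιB (L.br (f a) x) = LA.br (Φt i (ιC a)) (t • ιB x) := by
    intro i a x
    have h1 : L.br (f a) x = -(L.br x (f a)) := L.antisymm _ _
    rw [h1, map_neg, smul_neg, hbrL i x a,
      LA.antisymm (Φt i (ιC a)) (t • ιB x)]
  have hinj2 : ∀ x y : B, t • ιB x = t • ιB y → x = y := by
    intro x y h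
    have h0 := hinj (x - y) (by rw [map_sub, smul_sub, h, sub_self])
    linear_combination h0
  refine ⟨?_, ?_, ?_, ?_, ?_⟩
  · -- (1a)
    intro i a b c
    refine hinj _ ?_
    simp only [map_add, map_sub, smul_add, smul_sub]
    rw [hbrL i (Pe i a b) c, hbrL i (Pe i a c) b, hbrL i (Pe i b c) a,
      ← hPe i a b, ← hPe i a c, ← hPe i b c,
      ← hPe i (P.br a b) c, ← hPe i (P.br a c) b, ← hPe i (P.br b c) a]
    have jP := pb_jac3 P a b c
    have jL := pb_jac3 LA (Φt i (ιC a)) (Φt i (ιC b)) (Φt i (ιC c))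
    have hmap : Φt i (ιC (P.br (P.br a b) c)) - Φt i (ιC (P.br (P.br a c) b))
        + Φt i (ιC (P.br (P.br b c) a)) = 0 := by
      have h9 : P.br (P.br a b) c = P.br (P.br a c) b - P.br (P.br b c) a := by
        linear_combination jP
      rw [h9, map_sub, map_sub]; ring
    simp only [pb_sub_left]
    linear_combination hmap - jL
  · -- (1b)
    intro i j a b
    refine hinj _ ?_
    simp only [map_add, map_sub, smul_add, smul_sub]
    rw [hbrL j (ξ i j a) b, hbrR i a (ξ i j b), ← hξ i j a, ← hξ i j b,
      ← hξ i j (P.br a b), ← hPe j a b, ← hPe i a b]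
    simp only [pb_sub_left, pb_sub_right]
    ring
  · -- (1c)
    intro i j l a
    refine hinj _ ?_
    simp only [map_add, map_sub, smul_add, smul_sub]
    rw [← hξ i j a, ← hξ i l a, ← hξ j l a]
    ring
  · -- (2)
    intro Φt' Q ξ' Pe' hQ hξ'' hPe'
    constructor
    · intro i a b
      apply hinj2
      have ht' : t • Φt' i (ιC b) = t • Φt i (ιC b) := by
        have hb : Φt' i (ιC b) = Φt i (ιC b) + t • ιB (Q i b) := by
          linear_combination hQ i b
        rw [hb, smul_add, hts, add_zero]
      have e1 := hPe' i a b
      have e5 := hPe i a b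
      have e2 := hQ i (P.br a b)
      have e3 : LA.br (Φt' i (ιC a) - Φt i (ιC a)) (Φt' i (ιC b))
          = t • ιB (L.br (Q i a) (f b)) := by
        rw [hQ, hrepl _ _ _ ht']
        exact (hbrL i _ b).symm
      have e4 : LA.br (Φt i (ιC a)) (Φt' i (ιC b) - Φt i (ιC b))
          = t • ιB (L.br (f a) (Q i b)) := by
        rw [hQ]
        exact (hbrR i a _).symm
      simp only [pb_sub_left, pb_sub_right] at e3 e4
      simp only [map_neg, map_add, map_sub, smul_neg, smul_add, smul_sub]
      linear_combination -e1 + e5 - e3 - e4 + e2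
    · intro i j a
      apply hinj2
      simp only [map_sub, smul_sub]
      rw [← hξ'' i j a, ← hξ i j a, ← hQ j a, ← hQ i a]
      ring
  · -- (3)
    constructor
    · rintro ⟨Q, hQd, hQP, hQξ⟩
      refine ⟨fun i a => -(Q i a), fun i => ?_, ?_, ?_⟩
      · obtain ⟨h1, h2, h3⟩ := hQd i
        refine ⟨fun a b => ?_, fun r a => ?_, fun a b => ?_⟩
        · show -(Q i (a + b)) = -(Q i a) + -(Q i b); rw [h1]; ring
        · show -(Q i (r • a)) = r • -(Q i a); rw [h2, smul_neg]
        · show -(Q i (a * b)) = f a * -(Q i b) + f b * -(Q i a); rw [h3]; ring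
      · intro i j a
        show Φt i (ιC a) + t • ιB (-(Q i a)) = Φt j (ιC a) + t • ιB (-(Q j a))
        have h := hξ i j a
        rw [hQξ i j a, map_sub, smul_sub] at h
        simp only [map_neg, smul_neg]
        linear_combination -h
      · intro i a b
        show Φt i (ιC (P.br a b)) + t • ιB (-(Q i (P.br a b)))
            = LA.br (Φt i (ιC a) + t • ιB (-(Q i a))) (Φt i (ιC b) + t • ιB (-(Q i b)))
        have hP := hPe i a b
        have ebr : LA.br (Φt i (ιC a) + t • ιB (-(Q i a)))
              (Φt i (ιC b) + t • ιB (-(Q i b)))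
            = LA.br (Φt i (ιC a)) (Φt i (ιC b))
              + LA.br (t • ιB (-(Q i a))) (Φt i (ιC b))
              + LA.br (Φt i (ιC a)) (t • ιB (-(Q i b))) := by
          rw [LA.add_left, pb_add_right, pb_add_right, hbr2]; ring
        have e3 : LA.br (t • ιB (-(Q i a))) (Φt i (ιC b))
            = t • ιB (L.br (-(Q i a)) (f b)) := (hbrL i _ b).symm
        have e4 : LA.br (Φt i (ιC a)) (t • ιB (-(Q i b)))
            = t • ιB (L.br (f a) (-(Q i b))) := (hbrR i a _).symm
        have hB : Pe i a b + (-(Q i (P.br a b)))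
            = L.br (-(Q i a)) (f b) + L.br (f a) (-(Q i b)) := by
          rw [hQP i a b, pb_neg_left, pb_neg_right]; ring
        have hB' := congrArg (fun x : B => t • ιB x) hB
        simp only [map_add, smul_add] at hB'
        rw [ebr, e3, e4]
        linear_combination hP + hB'
    · rintro ⟨q, hqd, hagree, hpois⟩
      refine ⟨fun i a => -(q i a), fun i => ?_, ?_, ?_⟩
      · obtain ⟨h1, h2, h3⟩ := hqd i
        refine ⟨fun a b => ?_, fun r a => ?_, fun a b => ?_⟩
        · show -(q i (a + b)) = -(q i a) + -(q i b); rw [h1]; ring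
        · show -(q i (r • a)) = r • -(q i a); rw [h2, smul_neg]
        · show -(q i (a * b)) = f a * -(q i b) + f b * -(q i a); rw [h3]; ring
      · intro i a b
        show Pe i a b
            = -(L.br (-(q i a)) (f b) + L.br (f a) (-(q i b)) - -(q i (P.br a b)))
        have hgoal : Pe i a b
            = L.br (q i a) (f b) + L.br (f a) (q i b) - q i (P.br a b) := by
          apply hinj2
          have hp := hpois i a b
          have ebr : LA.br (Φt i (ιC a) + t • ιB (q i a))
                (Φt i (ιC b) + t • ιB (q i b))
              = LA.br (Φt i (ιC a)) (Φt i (ιC b))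
                + LA.br (t • ιB (q i a)) (Φt i (ιC b))
                + LA.br (Φt i (ιC a)) (t • ιB (q i b)) := by
            rw [LA.add_left, pb_add_right, pb_add_right, hbr2]; ring
          have e3 : LA.br (t • ιB (q i a)) (Φt i (ιC b))
              = t • ιB (L.br (q i a) (f b)) := (hbrL i _ b).symm
          have e4 : LA.br (Φt i (ιC a)) (t • ιB (q i b))
              = t • ιB (L.br (f a) (q i b)) := (hbrR i a _).symm
          rw [ebr, e3, e4] at hp
          simp only [map_add, map_sub, smul_add, smul_sub]
          rw [← hPe i a b]
          linear_combination hp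
        rw [hgoal, pb_neg_left, pb_neg_right]; ring
      · intro i j a
        show ξ i j a = -(q j a) - -(q i a)
        apply hinj2
        have h := hagree i j a
        simp only [map_sub, map_neg, smul_sub, smul_neg]
        rw [← hξ i j a]
        linear_combination -h
end

section
/- Cocycle identity for obstructions to deforming gluing maps: if r̃_{ij} are Ã-liftings of Poisson transition isomorphisms r_{ij} with r_{ij}r_{jk}r_{ki} = Id over A, then r̃_{ij}r̃_{jk}r̃_{ki} = Id + t d̃_{ijk} for derivations d̃_{ijk}, and any Ã-liftings Φ̃_i of compatible local Poisson morphisms (r_{ij}Φ_j = Φ_i) satisfy r̃_{ij}Φ̃_j − Φ̃_i = tξ_{ij} with ξ_{ij} − ξ_{ik} + ξ_{jk} = F(d̃_{ijk}), where F(d)(a) = d(f(a)). -/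
/-!
STATEMENT 14.  Cocycle identity for obstructions to deforming gluing maps.

Affine model on a triple overlap: `B = Γ(U_{ijk},O_X)` and `C` the target coordinate
ring, `BA`, `CA` the respective `Ã`-algebras `B⊗Ã`, `C⊗Ã` (given abstractly, with
`t`-reduction data: `t•x` only depends on the reduction of `x`, realized by `hsec` and
`hinj`).  The `r̃`'s are `Ã`-liftings of transition automorphisms satisfying
`r_{ij}r_{jk} = r_{ik}` over `A` and inducing the identity modulo the maximal ideal.
Conclusion: there exists a derivation `d̃_{ijk}` of `B` such that
`r̃_{ij}r̃_{jk} = r̃_{ik} + t d̃_{ijk}` (i.e. `r̃_{ij}r̃_{jk}r̃_{ki} = Id + t d̃_{ijk}`),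
and for any `Ã`-liftings `Φ̃_i` of compatible local Poisson morphisms
(`r_{ij}Φ_j = Φ_i`) the data `tξ_{ij} = r̃_{ij}Φ̃_j − Φ̃_i` satisfy
`ξ_{ij} − ξ_{ik} + ξ_{jk} = F(d̃_{ijk})` with `F(d)(a) = d(f(a))`.
-/
theorem stmt14
    {k B C At BA CA : Type*} [Field k]
    [CommRing B] [CommRing C] [Algebra k B] [Algebra k C]
    [CommRing At] [CommRing BA] [CommRing CA] [Algebra At BA] [Algebra At CA]
    (f : C →+* B)
    (ιB : B →+* BA) (ιC : C →+* CA)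
    (t : At) (ht2 : t * t = 0)
    (hinj : ∀ x : B, t • ιB x = 0 → x = 0)
    -- `t·(B⊗Ã) = t·(B⊗k)`: every `t`-multiple comes from `B`:
    (hsec : ∀ x : BA, ∃ b : B, t • x = t • ιB b)
    -- liftings of the transition automorphisms:
    (rij rjk rik : BA →+* BA)
    (hrij_lin : ∀ (s : At) (x : BA), rij (s • x) = s • rij x)
    (hrjk_lin : ∀ (s : At) (x : BA), rjk (s • x) = s • rjk x)
    (hrik_lin : ∀ (s : At) (x : BA), rik (s • x) = s • rik x)
    -- the `r`'s induce the identity modulo the maximal ideal: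
    (hrij_red : ∀ x : BA, t • rij x = t • x)
    (hrjk_red : ∀ x : BA, t • rjk x = t • x)
    (hrik_red : ∀ x : BA, t • rik x = t • x)
    -- `r̃_{ij}r̃_{jk}` lifts `r_{ik}` (cocycle condition over `A`):
    (hcompA : ∀ x : BA, ∃ y : BA, rij (rjk x) - rik x = t • y)
    (hdev0 : ∀ y : BA, t • y = 0 → rij (rjk y) - rik y = 0) :
    ∃ d : B → B,
      -- `d̃_{ijk}` is a derivation of `B`
      ((∀ a b, d (a + b) = d a + d b) ∧ (∀ a b, d (a * b) = a * d b + b * d a)) ∧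
      -- `r̃_{ij}r̃_{jk} = r̃_{ik} + t d̃_{ijk}` (on reductions)
      (∀ (x : BA) (b : B), t • x = t • ιB b → rij (rjk x) - rik x = t • ιB (d b)) ∧
      -- the Čech 1-cochain `ξ` of any compatible liftings has coboundary `F(d̃_{ijk})`:
      (∀ (Φt_i Φt_j Φt_k : CA →+* BA) (ξij ξik ξjk : C → B),
        (∀ a : C, t • Φt_i (ιC a) = t • ιB (f a)) →
        (∀ a : C, t • Φt_j (ιC a) = t • ιB (f a)) →
        (∀ a : C, t • Φt_k (ιC a) = t • ιB (f a)) →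
        (∀ a : C, rij (Φt_j (ιC a)) - Φt_i (ιC a) = t • ιB (ξij a)) →
        (∀ a : C, rik (Φt_k (ιC a)) - Φt_i (ιC a) = t • ιB (ξik a)) →
        (∀ a : C, rjk (Φt_k (ιC a)) - Φt_j (ιC a) = t • ιB (ξjk a)) →
        ∀ a : C, ξij a - ξik a + ξjk a = d (f a)) := by
  classical
  have huniq : ∀ c1 c2 : B, t • ιB c1 = t • ιB c2 → c1 = c2 := by
    intro c1 c2 h
    have h0 : t • ιB (c1 - c2) = 0 := by
      rw [map_sub, smul_sub, h, sub_self]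
    exact sub_eq_zero.mp (hinj _ h0)
  have hex : ∀ b : B, ∃ c : B, rij (rjk (ιB b)) - rik (ιB b) = t • ιB c := by
    intro b
    obtain ⟨y, hy⟩ := hcompA (ιB b)
    obtain ⟨c, hc⟩ := hsec y
    exact ⟨c, by rw [hy, hc]⟩
  set d : B → B := fun b => Classical.choose (hex b) with hd
  have hdspec : ∀ b : B, rij (rjk (ιB b)) - rik (ιB b) = t • ιB (d b) :=
    fun b => Classical.choose_spec (hex b)
  have key : ∀ (x : BA) (b : B), t • x = t • ιB b → rij (rjk x) - rik x = t • ιB (d b) := by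
    intro x b hx
    have h0 : t • (x - ιB b) = 0 := by rw [smul_sub, hx, sub_self]
    have h1 := hdev0 _ h0
    simp only [map_sub] at h1
    have h2 : rij (rjk x) - rik x = rij (rjk (ιB b)) - rik (ιB b) := by
      linear_combination h1
    rw [h2, hdspec]
  refine ⟨d, ⟨?_, ?_⟩, key, ?_⟩
  · -- additivity
    intro a b
    apply huniq
    have e1 : rij (rjk (ιB (a + b))) - rik (ιB (a + b)) =
        (rij (rjk (ιB a)) - rik (ιB a)) + (rij (rjk (ιB b)) - rik (ιB b)) := by
      simp only [map_add]; ring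
    have e2 := hdspec (a + b)
    rw [e1, hdspec a, hdspec b] at e2
    rw [← e2, map_add, smul_add]
  · -- Leibniz
    intro a b
    apply huniq
    have e1 : rij (rjk (ιB (a * b))) - rik (ιB (a * b)) =
        rij (rjk (ιB a)) * (rij (rjk (ιB b)) - rik (ιB b))
          + rik (ιB b) * (rij (rjk (ιB a)) - rik (ιB a)) := by
      simp only [map_mul]; ring
    have e2 := hdspec (a * b)
    rw [e1, hdspec a, hdspec b] at e2
    have e3 : rij (rjk (ιB a)) * (t • ιB (d b)) = t • (ιB a * ιB (d b)) := by
      rw [mul_smul_comm, ← smul_mul_assoc, ← smul_mul_assoc]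
      congr 1
      rw [hrij_red, hrjk_red]
    have e4 : rik (ιB b) * (t • ιB (d a)) = t • (ιB b * ιB (d a)) := by
      rw [mul_smul_comm, ← smul_mul_assoc, ← smul_mul_assoc]
      congr 1
      rw [hrik_red]
    rw [e3, e4] at e2
    rw [← e2, map_add, map_mul, map_mul, smul_add]
  · -- Čech part
    intro Φt_i Φt_j Φt_k ξij ξik ξjk hi hj hk hξij hξik hξjk a
    set ui := Φt_i (ιC a)
    set uj := Φt_j (ιC a)
    set uk := Φt_k (ιC a)
    have h1 : rij (rjk uk) - rik uk = t • ιB (d (f a)) := key uk (f a) (hk a)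
    have hjk : rjk uk = t • ιB (ξjk a) + uj := sub_eq_iff_eq_add.mp (hξjk a)
    have h2 : rij (rjk uk) = t • ιB (ξjk a) + rij uj := by
      rw [hjk, map_add, hrij_lin, hrij_red]
    have hij : rij uj = t • ιB (ξij a) + ui := sub_eq_iff_eq_add.mp (hξij a)
    have hik : rik uk = t • ιB (ξik a) + ui := sub_eq_iff_eq_add.mp (hξik a)
    have h3 : t • ιB (ξjk a) + (t • ιB (ξij a) + ui) - (t • ιB (ξik a) + ui)
        = t • ιB (d (f a)) := by
      rw [← hij, ← hik, ← h2, h1]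
    apply huniq
    rw [map_add, map_sub, smul_add, smul_sub, ← h3]
    abel
end

section
/- Correction of a lifted Poisson morphism by sections trivializing its obstruction cocycle: in the costability setting, suppose local morphisms Φ_j: C_j⊗A → B_j⊗A and corrected gluing data g_{ij}+t(d_{ij}+χ_{ij}), Π_i − t(λ_i+H_i) on the target satisfy r_{ij}Φ_j − Φ_i(g_{ij}+td_{ij}) = tG_{ij} and Φ_i^*(Π_i − tλ_i) − Φ_iΛ_i = tL_i, and suppose (χ = {χ_{ij}}, H = {H_i}) is a 1-cocycle of T_Y^• and τ_i ∈ Γ(U_i, f^*T_Y) satisfy G_{ij} − f^*(χ_{ij}) = τ_i − τ_j and L_i − f^*(H_i) = π(τ_i). Then Φ_j + tτ_j are Poisson morphisms compatible with the corrected gluing data: (Φ_i + tτ_i)∘(g_{ij} + t(d_{ij}+χ_{ij})) = r_{ij}∘(Φ_j + tτ_j), and (Φ_j + tτ_j)((Π_j − t(λ_j+H_j))(a,b)) = Λ_j((Φ_j+tτ_j)(a), (Φ_j+tτ_j)(b)). -/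
/-!
STATEMENT 19.  (Costability correction step.)  On an overlap, with the domain-side
deformation glued by `r_{ij}` with brackets fixed, target-side data
`g_{ij} + t(d_{ij} + χ_{ij})` and `Π_j − t(λ_j + H_j)`, local morphisms `Φ_i, Φ_j`
lifting `f`, error terms `tG_{ij} = r_{ij}Φ_j − Φ_i(g_{ij} + td_{ij})` and
`tL = Φ_j^*(Π_j − tλ_j) − Φ_jΛ_j`, and a `1`-cocycle `(χ,H)` of `T_Y^•` together with
`τ_i ∈ Γ(U_i, f^*T_Y)` satisfying `G_{ij} − f^*(χ_{ij}) = τ_i − τ_j` and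
`L − f^*(H_j) = π(τ_j)`: then the corrected morphisms `Φ + tτ` are Poisson and
compatible with the corrected gluing data:
`(Φ_i + tτ_i)∘(g_{ij} + t(d_{ij}+χ_{ij})) = r_{ij}∘(Φ_j + tτ_j)` and
`(Φ_j + tτ_j)((Π_j − t(λ_j+H_j))(a,b)) = Λ_j((Φ_j+tτ_j)a, (Φ_j+tτ_j)b)`.

(All `t`-reduction facts `t·m_A = 0` are expressed by `t·t = 0` together with the
hypotheses that `g_{ij}`, `r_{ij}` induce the identity and `Φ_i, Φ_j` induce `f₀`
modulo the maximal ideal, and that the brackets reduce to `Π₀`, `Λ₀`.)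
-/
theorem stmt19
    {k At CA BA : Type*} [Field k] [CommRing At] [Algebra k At]
    [CommRing CA] [CommRing BA] [Algebra At CA] [Algebra At BA]
    (t : At) (ht2 : t * t = 0)
    -- the reduction `f₀` of the morphisms:
    (f0 : CA →+* BA)
    (hf0_lin : ∀ (s : At) (x : CA), f0 (s • x) = s • f0 x)
    -- local morphisms lifting `f`:
    (Phi_i Phi_j : CA →+* BA)
    (hPhii_lin : ∀ (s : At) (x : CA), Phi_i (s • x) = s • Phi_i x)
    (hPhij_lin : ∀ (s : At) (x : CA), Phi_j (s • x) = s • Phi_j x)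
    (hPhii_red : ∀ x : CA, t • Phi_i x = t • f0 x)
    (hPhij_red : ∀ x : CA, t • Phi_j x = t • f0 x)
    -- gluing data on source (`X`-side) and target (`Y`-side):
    (rij : BA →+* BA)
    (hrij_lin : ∀ (s : At) (x : BA), rij (s • x) = s • rij x)
    (hrij_red : ∀ x : BA, t • rij x = t • x)
    (gij : CA →+* CA)
    (hgij_lin : ∀ (s : At) (x : CA), gij (s • x) = s • gij x)
    (hgij_red : ∀ x : CA, t • gij x = t • x)
    -- brackets and their reductions:
    (Pj : CA → CA → CA) (P0 : CA → CA → CA) (Lj : BA → BA → BA) (L0 : BA → BA → BA)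
    (hPj_addl : ∀ a b c, Pj (a + b) c = Pj a c + Pj b c)
    (hPj_addr : ∀ a b c, Pj a (b + c) = Pj a b + Pj a c)
    (hPj_sml : ∀ (s : At) (a b : CA), Pj (s • a) b = s • Pj a b)
    (hPj_smr : ∀ (s : At) (a b : CA), Pj a (s • b) = s • Pj a b)
    (hLj_addl : ∀ a b c, Lj (a + b) c = Lj a c + Lj b c)
    (hLj_addr : ∀ a b c, Lj a (b + c) = Lj a b + Lj a c)
    (hLj_sml : ∀ (s : At) (a b : BA), Lj (s • a) b = s • Lj a b)
    (hLj_smr : ∀ (s : At) (a b : BA), Lj a (s • b) = s • Lj a b)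
    (hPj_red : ∀ a b, t • Pj a b = t • P0 a b)
    (hLj_red : ∀ a b, t • Lj a b = t • L0 a b)
    -- correction data `d`, `χ`, `λ`, `H` and error terms `G`, `L`:
    (dij χij : CA → CA) (lj Hj Hi : CA → CA → CA)
    (hdij_add : ∀ a b, dij (a + b) = dij a + dij b)
    (hdij_lin : ∀ (s : At) (x : CA), dij (s • x) = s • dij x)
    (hχij_add : ∀ a b, χij (a + b) = χij a + χij b)
    (hχij_lin : ∀ (s : At) (x : CA), χij (s • x) = s • χij x)
    (hlj_addl : ∀ a b c, lj (a + b) c = lj a c + lj b c)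
    (hlj_addr : ∀ a b c, lj a (b + c) = lj a b + lj a c)
    (hlj_sml : ∀ (s : At) (a b : CA), lj (s • a) b = s • lj a b)
    (hlj_smr : ∀ (s : At) (a b : CA), lj a (s • b) = s • lj a b)
    (hHj_addl : ∀ a b c, Hj (a + b) c = Hj a c + Hj b c)
    (hHj_addr : ∀ a b c, Hj a (b + c) = Hj a b + Hj a c)
    (hHj_sml : ∀ (s : At) (a b : CA), Hj (s • a) b = s • Hj a b)
    (hHj_smr : ∀ (s : At) (a b : CA), Hj a (s • b) = s • Hj a b)
    (G : CA → BA) (Ler : CA → CA → BA)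
    -- `τ`'s:
    (τi τj : CA → BA)
    (hτi_add : ∀ a b, τi (a + b) = τi a + τi b)
    (hτi_lin : ∀ (s : At) (x : CA), τi (s • x) = s • τi x)
    (hτj_add : ∀ a b, τj (a + b) = τj a + τj b)
    (hτj_lin : ∀ (s : At) (x : CA), τj (s • x) = s • τj x)
    -- defining equations of the error terms:
    (hG : ∀ x : CA, rij (Phi_j x) - Phi_i (gij x + t • dij x) = t • G x)
    (hL : ∀ a b : CA,
      Phi_j (Pj a b - t • lj a b) - Lj (Phi_j a) (Phi_j b) = t • Ler a b)
    -- `(χ,H)` is a 1-cocycle of `T_Y^•`: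
    (hcoc1 : ∀ a b : CA,
      Hj a b - Hi a b + (χij (P0 a b) - P0 (χij a) b - P0 a (χij b)) = 0)
    (hcoc2 : ∀ a b c : CA,
      Hj a (P0 b c) + Hj b (P0 c a) + Hj c (P0 a b)
        + P0 a (Hj b c) + P0 b (Hj c a) + P0 c (Hj a b) = 0)
    -- the trivialization hypotheses:
    (hGχ : ∀ x : CA, G x - f0 (χij x) = τi x - τj x)
    (hLH : ∀ a b : CA,
      Ler a b - f0 (Hj a b)
        = L0 (τj a) (f0 b) + L0 (f0 a) (τj b) - τj (P0 a b)) :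
    -- conclusions:
    ((∀ x : CA,
        Phi_i (gij x + t • (dij x + χij x)) + t • τi (gij x + t • (dij x + χij x))
          = rij (Phi_j x + t • τj x))
    ∧ (∀ a b : CA,
        Phi_j (Pj a b - t • (lj a b + Hj a b)) + t • τj (Pj a b - t • (lj a b + Hj a b))
          = Lj (Phi_j a + t • τj a) (Phi_j b + t • τj b))) := by
  have httB : ∀ y : BA, t • (t • y) = 0 := fun y => by
    rw [smul_smul, ht2, zero_smul]
  constructor
  · intro x
    have e1 : Phi_i (gij x + t • (dij x + χij x))
        = Phi_i (gij x + t • dij x) + t • f0 (χij x) := by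
      rw [smul_add, ← add_assoc, map_add, hPhii_lin, hPhii_red]
    have e2 : t • τi (gij x + t • (dij x + χij x)) = t • τi x := by
      rw [hτi_add, smul_add, hτi_lin, httB, add_zero, ← hτi_lin, hgij_red, hτi_lin]
    have e3 : rij (Phi_j x + t • τj x) = rij (Phi_j x) + t • τj x := by
      rw [map_add, hrij_lin, hrij_red]
    have h4 := hG x
    have h5 : t • G x - t • f0 (χij x) = t • τi x - t • τj x := by
      rw [← smul_sub, hGχ, smul_sub]
    rw [e1, e2, e3]
    simp only [Algebra.smul_def] at h4 h5 ⊢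
    linear_combination -h4 - h5
  · intro a b
    have τj_sub : ∀ x y : CA, τj (x - y) = τj x - τj y := by
      intro x y
      have := hτj_add (x - y) y
      rw [sub_add_cancel] at this
      rw [this]; ring
    have e1 : Phi_j (Pj a b - t • (lj a b + Hj a b))
        = Phi_j (Pj a b - t • lj a b) - t • f0 (Hj a b) := by
      rw [smul_add, ← sub_sub, map_sub, hPhij_lin, hPhij_red]
    have e2 : t • τj (Pj a b - t • (lj a b + Hj a b)) = t • τj (P0 a b) := by
      rw [τj_sub, smul_sub, hτj_lin, httB, sub_zero, ← hτj_lin, hPj_red, hτj_lin]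
    have h3 := hL a b
    have h4 : t • Ler a b - t • f0 (Hj a b)
        = t • L0 (τj a) (f0 b) + t • L0 (f0 a) (τj b) - t • τj (P0 a b) := by
      rw [← smul_sub, hLH, smul_sub, smul_add]
    have e5 : Lj (Phi_j a + t • τj a) (Phi_j b + t • τj b)
        = Lj (Phi_j a) (Phi_j b) + t • L0 (f0 a) (τj b) + t • L0 (τj a) (f0 b) := by
      rw [hLj_addl, hLj_addr, hLj_addr]
      have t1 : Lj (Phi_j a) (t • τj b) = t • L0 (f0 a) (τj b) := by
        rw [hLj_smr, ← hLj_sml, hPhij_red, hLj_sml, hLj_red]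
      have t2 : Lj (t • τj a) (Phi_j b) = t • L0 (τj a) (f0 b) := by
        rw [hLj_sml, ← hLj_smr, hPhij_red, hLj_smr, hLj_red]
      have t3 : Lj (t • τj a) (t • τj b) = 0 := by
        rw [hLj_sml, hLj_smr, httB]
      rw [t1, t2, t3]
      ring
    rw [e1, e2, e5]
    simp only [Algebra.smul_def] at h3 h4 ⊢
    linear_combination h3 + h4
end
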